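/- arXiv:1404.3226 — 6 statements merged into one kernel-verified Lean document; each statement's English description precedes it below -/
import Mathlib

section
/- Suppose additionally that u_0 is not identically zero. Then for every R > 0 and every t > 0, inf_{x ∈ B_R} u(x,t) > 0, where B_R = {x ∈ ℝ^N : |x| < R}. -/
open MeasureTheory Filter

variable {N : ℕ}

lemma aux_integrable (J : EuclideanSpace ℝ (Fin N) → ℝ) (hJc : Continuous J)
    (hJsupp : Function.support J ⊆ Metric.closedBall 0 1)
    (g : EuclideanSpace ℝ (Fin N) → ℝ) (hg : Continuous g) (x : EuclideanSpace ℝ (Fin N)) :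
    Integrable (fun y => J (x - y) * g y) := by
  apply Continuous.integrable_of_hasCompactSupport
    ((hJc.comp (continuous_const.sub continuous_id)).mul hg)
  apply HasCompactSupport.intro (isCompact_closedBall x 1)
  intro y hy
  have hJ : J (x - y) = 0 := by
    by_contra h
    have h2 := hJsupp (Function.mem_support.2 h)
    apply hy
    simp only [Metric.mem_closedBall, dist_eq_norm] at h2 ⊢
    rw [sub_zero] at h2
    rwa [← norm_sub_rev]
  simp [hJ]

lemma aux_int_pos (f : EuclideanSpace ℝ (Fin N) → ℝ) (hc : Continuous f) (hi : Integrable f)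
    (hnn : ∀ y, 0 ≤ f y) (y₀ : EuclideanSpace ℝ (Fin N)) (hpos : 0 < f y₀) :
    0 < ∫ y, f y := by
  rw [integral_pos_iff_support_of_nonneg hnn hi]
  exact hc.isOpen_support.measure_pos _ ⟨y₀, hpos.ne'⟩

set_option maxHeartbeats 1600000

/-- If `u₀ ≢ 0`, then for every `R > 0` and `t > 0`,
`inf_{x ∈ B_R} u(x,t) > 0`. -/
theorem stmt_6
    (N : ℕ) (hN : 0 < N)
    (J : EuclideanSpace ℝ (Fin N) → ℝ)
    (hJsm : ContDiff ℝ (⊤ : ℕ∞) J)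
    (hJsupp : Function.support J ⊆ Metric.closedBall 0 1)
    (hJnn : ∀ x, 0 ≤ J x)
    (hJrad : ∀ x y : EuclideanSpace ℝ (Fin N), ‖x‖ = ‖y‖ → J x = J y)
    (hJint : ∫ x, J x = 1)
    (p : ℝ) (hp : 1 < p)
    (u₀ : EuclideanSpace ℝ (Fin N) → ℝ)
    (hu₀nn : ∀ x, 0 ≤ u₀ x) (hu₀bd : ∃ M, ∀ x, u₀ x ≤ M)
    (u : EuclideanSpace ℝ (Fin N) → ℝ → ℝ)
    (hubd : ∃ M, ∀ x t, |u x t| ≤ M)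
    (hunn : ∀ x t, 0 ≤ t → 0 ≤ u x t)
    (hucont : Continuous fun q : EuclideanSpace ℝ (Fin N) × ℝ => u q.1 q.2)
    (hueq : ∀ x t, 0 < t →
      HasDerivAt (u x) ((∫ y, J (x - y) * (u y t - u x t)) - u x t ^ p) t)
    (huinit : ∀ x, u x 0 = u₀ x)
    (hu₀ne : ∃ x, u₀ x ≠ 0) :
    ∀ R, 0 < R → ∀ t : ℝ, 0 < t →
      ∃ m > (0 : ℝ), ∀ x : EuclideanSpace ℝ (Fin N), ‖x‖ < R → m ≤ u x t := by
  obtain ⟨M, hM⟩ := hubd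
  obtain ⟨x₀, hx₀ne⟩ := hu₀ne
  have hx₀pos : 0 < u₀ x₀ := (hu₀nn x₀).lt_of_ne (Ne.symm hx₀ne)
  have hJc : Continuous J := hJsm.continuous
  have hM0 : 0 ≤ M := (abs_nonneg (u 0 0)).trans (hM 0 0)
  have hub : ∀ x t, u x t ≤ M := fun x t => (le_abs_self _).trans (hM x t)
  set Cc : ℝ := 1 + M ^ (p - 1) with hCcdef
  have hMp : 0 ≤ M ^ (p - 1) := Real.rpow_nonneg hM0 _
  have hCcpos : 0 < Cc := by rw [hCcdef]; linarith
  have hucx : ∀ x, Continuous (fun s => u x s) := fun x => hucont.comp (Continuous.prodMk_right x)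
  have hucy : ∀ t : ℝ, Continuous (fun y => u y t) :=
    fun t => hucont.comp (continuous_id.prodMk continuous_const)
  -- power bound
  have hpow : ∀ a : ℝ, 0 ≤ a → a ≤ M → a ^ p ≤ M ^ (p - 1) * a := by
    intro a ha haM
    rcases ha.eq_or_lt with h | h
    · rw [← h]
      simp [Real.zero_rpow (by positivity : p ≠ 0)]
    · have hsplit : a ^ p = a ^ (p - 1) * a := by
        have h1 : p - 1 + 1 = p := by ring
        calc a ^ p = a ^ (p - 1 + 1) := by rw [h1]
          _ = a ^ (p - 1) * a ^ (1 : ℝ) := Real.rpow_add h _ _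
          _ = a ^ (p - 1) * a := by rw [Real.rpow_one]
      rw [hsplit]
      exact mul_le_mul_of_nonneg_right (Real.rpow_le_rpow h.le haM (by linarith)) ha
  -- integrability
  have hI : ∀ x t, Integrable (fun y => J (x - y) * u y t) :=
    fun x t => aux_integrable J hJc hJsupp _ (hucy t) x
  have hInn : ∀ x t, 0 ≤ t → 0 ≤ ∫ y, J (x - y) * u y t :=
    fun x t ht => integral_nonneg fun y => mul_nonneg (hJnn _) (hunn y t ht)
  -- derivative lower bound
  have hDlb : ∀ x t, 0 < t →
      (∫ y, J (x - y) * u y t) - Cc * u x t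
        ≤ (∫ y, J (x - y) * (u y t - u x t)) - u x t ^ p := by
    intro x t ht
    have h1 : Integrable (fun y => J (x - y) * u y t) := hI x t
    have h2 : Integrable (fun y => J (x - y) * u x t) :=
      aux_integrable J hJc hJsupp (fun _ => u x t) continuous_const x
    have hsplit : (∫ y, J (x - y) * (u y t - u x t))
        = (∫ y, J (x - y) * u y t) - ∫ y, J (x - y) * u x t := by
      rw [← integral_sub h1 h2]
      congr 1; funext y; ring
    have hone : (∫ y, J (x - y) * u x t) = u x t := by
      rw [integral_mul_const, integral_sub_left_eq_self J volume x, hJint, one_mul]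
    have hup : u x t ^ p ≤ M ^ (p - 1) * u x t := hpow _ (hunn x t ht.le) (hub x t)
    rw [hsplit, hone, hCcdef]
    nlinarith
  -- derivative of the auxiliary function
  have hg : ∀ x s, 0 < s → HasDerivAt (fun r => Real.exp (Cc * r) * u x r)
      (Real.exp (Cc * s) *
        (Cc * u x s + ((∫ y, J (x - y) * (u y s - u x s)) - u x s ^ p))) s := by
    intro x s hs
    have h1 : HasDerivAt (fun r : ℝ => Real.exp (Cc * r)) (Real.exp (Cc * s) * (Cc * 1)) s :=
      ((hasDerivAt_id s).const_mul Cc).exp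
    have h2 := hueq x s hs
    have := h1.mul h2
    refine this.congr_deriv ?_
    ring
  have hgcont : ∀ x : EuclideanSpace ℝ (Fin N),
      Continuous (fun r => Real.exp (Cc * r) * u x r) :=
    fun x => (Real.continuous_exp.comp (continuous_const.mul continuous_id)).mul (hucx x)
  -- monotonicity / persistence
  have hmono : ∀ x s₁ s₂, 0 < s₁ → s₁ ≤ s₂ →
      Real.exp (Cc * s₁) * u x s₁ ≤ Real.exp (Cc * s₂) * u x s₂ := by
    intro x s₁ s₂ hs₁ hs
    have hmo : MonotoneOn (fun r => Real.exp (Cc * r) * u x r) (Set.Icc s₁ s₂) := by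
      apply monotoneOn_of_deriv_nonneg (convex_Icc s₁ s₂) (hgcont x).continuousOn
      · intro s hs'
        rw [interior_Icc] at hs'
        exact (hg x s (hs₁.trans hs'.1)).differentiableAt.differentiableWithinAt
      · intro s hs'
        rw [interior_Icc] at hs'
        have hs0 : 0 < s := hs₁.trans hs'.1
        rw [(hg x s hs0).deriv]
        have hd := hDlb x s hs0
        have hi := hInn x s hs0.le
        have : 0 ≤ Cc * u x s + ((∫ y, J (x - y) * (u y s - u x s)) - u x s ^ p) := by
          linarith
        positivity
    exact hmo (Set.left_mem_Icc.2 hs) (Set.right_mem_Icc.2 hs) hs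
  have pers : ∀ x s₁ s₂, 0 < s₁ → s₁ ≤ s₂ → 0 < u x s₁ → 0 < u x s₂ := by
    intro x s₁ s₂ h1 h2 h3
    have h4 := hmono x s₁ s₂ h1 h2
    have h5 : 0 < Real.exp (Cc * s₁) * u x s₁ := mul_pos (Real.exp_pos _) h3
    nlinarith [Real.exp_pos (Cc * s₂)]
  -- one-step spreading
  have step : ∀ x y t₁ t₂, 0 < t₁ → t₁ < t₂ → 0 < J (x - y) → 0 < u y t₁ → 0 < u x t₂ := by
    intro x y t₁ t₂ ht₁ ht hJxy huy
    have hsm : StrictMonoOn (fun r => Real.exp (Cc * r) * u x r) (Set.Icc t₁ t₂) := by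
      apply strictMonoOn_of_deriv_pos (convex_Icc _ _) (hgcont x).continuousOn
      intro s hs'
      rw [interior_Icc] at hs'
      have hs0 : 0 < s := ht₁.trans hs'.1
      rw [(hg x s hs0).deriv]
      have hIpos : 0 < ∫ z, J (x - z) * u z s := by
        apply aux_int_pos _ ((hJc.comp (continuous_const.sub continuous_id)).mul (hucy s))
          (hI x s) (fun z => mul_nonneg (hJnn _) (hunn z s hs0.le)) y
        exact mul_pos hJxy (pers y t₁ s ht₁ hs'.1.le huy)
      have hd := hDlb x s hs0
      have : 0 < Cc * u x s + ((∫ z, J (x - z) * (u z s - u x s)) - u x s ^ p) := by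
        linarith
      positivity
    have hlt : Real.exp (Cc * t₁) * u x t₁ < Real.exp (Cc * t₂) * u x t₂ :=
      hsm (Set.left_mem_Icc.2 ht.le) (Set.right_mem_Icc.2 ht.le) ht
    have h0 : 0 ≤ Real.exp (Cc * t₁) * u x t₁ :=
      mul_nonneg (Real.exp_pos _).le (hunn x t₁ ht₁.le)
    nlinarith [Real.exp_pos (Cc * t₂)]
  -- seed
  have seed : ∀ t : ℝ, 0 < t → 0 < u x₀ t := by
    have h0 : 0 < u x₀ 0 := by rw [huinit]; exact hx₀pos
    have hmem : {s : ℝ | 0 < u x₀ s} ∈ nhds (0 : ℝ) :=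
      (hucx x₀).continuousAt.preimage_mem_nhds (Ioi_mem_nhds h0)
    obtain ⟨τ, hτ, hball⟩ := Metric.mem_nhds_iff.1 hmem
    intro t ht
    rcases lt_or_ge t τ with h | h
    · exact hball (by simp [Real.dist_eq, abs_of_pos ht, h] : t ∈ Metric.ball 0 τ)
    · have h1 : 0 < u x₀ (τ / 2) :=
        hball (by
          simp only [Metric.mem_ball, Real.dist_eq, sub_zero]
          rw [abs_of_pos (half_pos hτ)]; linarith)
      exact pers x₀ (τ / 2) t (half_pos hτ) (by linarith) h1
  -- J positive somewhere
  obtain ⟨z₀, hz₀⟩ : ∃ z, 0 < J z := by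
    by_contra h
    push_neg at h
    have hz : ∀ z, J z = 0 := fun z => le_antisymm (h z) (hJnn z)
    have : (∫ x, J x) = 0 := by simp [hz]
    rw [hJint] at this
    norm_num at this
  -- unit vector
  set e : EuclideanSpace ℝ (Fin N) := EuclideanSpace.single ⟨0, hN⟩ (1 : ℝ) with hedef
  have he : ‖e‖ = 1 := by simp [hedef]
  set r₀ : ℝ := ‖z₀‖ with hr₀def
  have hr₀ : 0 ≤ r₀ := norm_nonneg _
  have hJr₀ : 0 < J (r₀ • e) := by
    rw [hJrad (r₀ • e) z₀ (by rw [norm_smul, he, Real.norm_eq_abs, abs_of_nonneg hr₀, mul_one])]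
    exact hz₀
  have hcr : Continuous (fun r : ℝ => J (r • e)) :=
    hJc.comp (continuous_id.smul continuous_const)
  obtain ⟨η, hη, hηJ⟩ : ∃ η > 0, ∀ r : ℝ, |r - r₀| < η → 0 < J (r • e) := by
    have hopen : IsOpen {r : ℝ | 0 < J (r • e)} := isOpen_lt continuous_const hcr
    obtain ⟨η, hη, hsub⟩ := Metric.isOpen_iff.1 hopen r₀ hJr₀
    exact ⟨η, hη, fun r hr => hsub (by rwa [Metric.mem_ball, Real.dist_eq])⟩
  have hann : ∀ z : EuclideanSpace ℝ (Fin N), r₀ - η < ‖z‖ → ‖z‖ < r₀ + η → 0 < J z := by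
    intro z h1 h2
    have hz : J z = J (‖z‖ • e) :=
      hJrad _ _ (by rw [norm_smul, he, Real.norm_eq_abs, abs_of_nonneg (norm_nonneg z), mul_one])
    rw [hz]
    exact hηJ _ (abs_lt.2 ⟨by linarith, by linarith⟩)
  set b : ℝ := r₀ + η with hbdef
  have hb : 0 < b := by rw [hbdef]; linarith
  set ε : ℝ := min η (b / 2) with hεdef
  have hε : 0 < ε := lt_min hη (half_pos hb)
  have hεη : ε ≤ η := min_le_left _ _
  have hεb : ε ≤ b / 2 := min_le_right _ _
  -- two-step spreading
  have two : ∀ (x y : EuclideanSpace ℝ (Fin N)) (t₁ t₂ : ℝ), 0 < t₁ → t₁ < t₂ →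
      ‖x - y‖ < ε → 0 < u y t₁ → 0 < u x t₂ := by
    intro x y t₁ t₂ ht₁ ht hd huy
    set d : ℝ := ‖x - y‖ with hddef
    have hd0 : 0 ≤ d := norm_nonneg _
    obtain ⟨e', he', hxy⟩ : ∃ e' : EuclideanSpace ℝ (Fin N), ‖e'‖ = 1 ∧ x - y = d • e' := by
      rcases eq_or_lt_of_le hd0 with h | h
      · refine ⟨e, he, ?_⟩
        rw [← h, zero_smul]
        exact norm_eq_zero.1 h.symm
      · refine ⟨d⁻¹ • (x - y), ?_, ?_⟩
        · rw [norm_smul, Real.norm_eq_abs, abs_of_pos (inv_pos.2 h), ← hddef,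
            inv_mul_cancel₀ h.ne']
        · rw [smul_smul, mul_inv_cancel₀ h.ne', one_smul]
    set s : ℝ := (max (r₀ - η + d) d + b) / 2 with hsdef
    have hmax : max (r₀ - η + d) d < b := by
      apply max_lt
      · have : d < 2 * η := by
          calc d < ε := hd
          _ ≤ η := hεη
          _ < 2 * η := by linarith
        rw [hbdef]; linarith
      · calc d < ε := hd
        _ ≤ b / 2 := hεb
        _ < b := by linarith
    have hs1 : max (r₀ - η + d) d < s := by rw [hsdef]; linarith
    have hs2 : s < b := by rw [hsdef]; linarith
    have hsd : d < s := lt_of_le_of_lt (le_max_right _ _) hs1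
    have hsa : r₀ - η + d < s := lt_of_le_of_lt (le_max_left _ _) hs1
    set w : EuclideanSpace ℝ (Fin N) := y + s • e' with hwdef
    have hw1 : 0 < J (w - y) := by
      have hwy : w - y = s • e' := by rw [hwdef]; abel
      rw [hwy]
      have hns : ‖s • e'‖ = s := by
        rw [norm_smul, he', Real.norm_eq_abs, abs_of_pos (hd0.trans_lt hsd), mul_one]
      exact hann _ (by rw [hns]; linarith) (by rw [hns]; linarith [hbdef])
    have hw2 : 0 < J (x - w) := by
      have hxw : x - w = (d - s) • e' := by
        rw [hwdef, sub_smul]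
        rw [← hxy]
        abel
      rw [hxw]
      have hns : ‖(d - s) • e'‖ = s - d := by
        rw [norm_smul, he', Real.norm_eq_abs, abs_of_neg (by linarith : d - s < 0), mul_one]
        ring
      exact hann _ (by rw [hns]; linarith) (by rw [hns]; linarith [hbdef])
    have hmid := step w y t₁ ((t₁ + t₂) / 2) ht₁ (by linarith) hw1 huy
    exact step x w ((t₁ + t₂) / 2) t₂ (by linarith) (by linarith) hw2 hmid
  -- induction on number of steps
  have main : ∀ n : ℕ, ∀ x : EuclideanSpace ℝ (Fin N), ‖x - x₀‖ < n * (ε / 2) →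
      ∀ t : ℝ, 0 < t → 0 < u x t := by
    intro n
    induction n with
    | zero =>
      intro x hx
      norm_num at hx
      exact absurd hx (norm_nonneg _).not_gt
    | succ n ih =>
      intro x hx t ht
      by_cases hcase : ‖x - x₀‖ < n * (ε / 2)
      · exact ih x hcase t ht
      · push_neg at hcase
        rcases Nat.eq_zero_or_pos n with hn | hn
        · subst hn
          push_cast at hx
          norm_num at hx
          apply two x x₀ (t / 2) t (half_pos ht) (by linarith) (by linarith)
          exact seed (t / 2) (half_pos ht)
        · set d : ℝ := ‖x - x₀‖ with hddef
          have hn1 : (1 : ℝ) ≤ (n : ℝ) := by exact_mod_cast hn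
          have hd0 : 0 < d := by
            calc (0 : ℝ) < n * (ε / 2) := by positivity
              _ ≤ d := hcase
          set c : ℝ := n * (ε / 2) - ε / 4 with hcdef
          have hhalf : ε / 2 ≤ (n : ℝ) * (ε / 2) :=
            le_mul_of_one_le_left (by positivity) hn1
          have hc0 : 0 < c := by rw [hcdef]; linarith
          set y : EuclideanSpace ℝ (Fin N) := x₀ + (c / d) • (x - x₀) with hydef
          have hyx₀ : ‖y - x₀‖ = c := by
            have h1 : y - x₀ = (c / d) • (x - x₀) := by rw [hydef]; abel
            rw [h1, norm_smul, Real.norm_eq_abs, abs_of_pos (by positivity), ← hddef]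
            field_simp
          have hcd : c < d := by
            calc c < n * (ε / 2) := by rw [hcdef]; linarith
              _ ≤ d := hcase
          have h1 : ‖y - x₀‖ < n * (ε / 2) := by rw [hyx₀, hcdef]; linarith
          have h2 : ‖x - y‖ < ε := by
            have hxy : x - y = (1 - c / d) • (x - x₀) := by
              rw [hydef, sub_smul, one_smul]
              abel
            rw [hxy, norm_smul, Real.norm_eq_abs, ← hddef,
              abs_of_pos (by rw [sub_pos]; exact (div_lt_one hd0).2 hcd)]
            have hpush : (↑(n + 1) : ℝ) = (n : ℝ) + 1 := by push_cast; ring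
            have hdlt : d < (n : ℝ) * (ε / 2) + ε / 2 := by
              rw [hddef]
              calc ‖x - x₀‖ < (↑(n + 1) : ℝ) * (ε / 2) := hx
                _ = (n : ℝ) * (ε / 2) + ε / 2 := by rw [hpush]; ring
            have heq : (1 - c / d) * d = d - c := by field_simp
            rw [heq]
            have hfin : d - c < ε / 2 + ε / 4 := by linarith
            show d - c < ε
            exact hfin.trans_le (by linarith only [hε])
          exact two x y (t / 2) t (half_pos ht) (by linarith) h2 (ih y h1 (t / 2) (half_pos ht))
  -- conclusion
  intro R hR t ht
  obtain ⟨n, hn⟩ := exists_nat_gt ((R + ‖x₀‖) / (ε / 2))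
  have hpos : ∀ x : EuclideanSpace ℝ (Fin N), ‖x‖ ≤ R → 0 < u x t := by
    intro x hx
    apply main n x _ t ht
    have h1 : ‖x - x₀‖ ≤ ‖x‖ + ‖x₀‖ := norm_sub_le x x₀
    have h2 : R + ‖x₀‖ < n * (ε / 2) := by
      rwa [div_lt_iff₀ (by positivity)] at hn
    linarith
  obtain ⟨xm, hxm, hmin⟩ := (isCompact_closedBall (0 : EuclideanSpace ℝ (Fin N)) R).exists_isMinOn
    ⟨0, by simp [hR.le]⟩ ((hucy t).continuousOn)
  refine ⟨u xm t, hpos xm (by simpa [dist_eq_norm] using hxm), ?_⟩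
  intro x hx
  exact hmin (by simp [Metric.mem_closedBall, dist_eq_norm, hx.le])
end

section
/- Let φ : (0,∞) → (0,∞) be a function (not necessarily continuous) such that y² φ(y) → ∞ as y → ∞. Then there exists a nondecreasing function R : (0,∞) → (0,∞) such that y / R(y)² → 0 and y φ(R(y)) → ∞ as y → ∞. -/
open Filter Set

/-!
Replace `y² φ(y)` by its nondecreasing lower envelope `g`, which still tends to `∞`, and put
`s(y) = √(g(√y))` and `R(y) = √(y · max(1, s(y)))`. Then `y / R(y)² = 1 / max(1, s(y)) → 0`, and
since `R(y) ≥ √y`, eventually `y φ(R(y)) = R(y)² φ(R(y)) / s(y) ≥ g(√y) / s(y) = s(y) → ∞`.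
-/

theorem Filter.Tendsto.exists_monotone_tendsto_atTop_le {α β : Type*} [SemilatticeSup α]
    [Nonempty α] [ConditionallyCompleteLinearOrder β] {f : α → β}
    (hf : Tendsto f atTop atTop) :
    ∃ g : α → β, Monotone g ∧ Tendsto g atTop atTop ∧ ∀ᶠ t in atTop, ∀ z, t ≤ z → g t ≤ f z := by
  obtain ⟨a⟩ := ‹Nonempty α›
  obtain ⟨T, hT⟩ := eventually_atTop.mp (hf.eventually_ge_atTop (f a))
  have hbdd : ∀ t, BddBelow (f '' Ici (max t T)) := fun t =>
    ⟨f a, forall_mem_image.mpr fun z hz => hT z (le_sup_right.trans hz)⟩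
  have hne : ∀ t, (f '' Ici (max t T)).Nonempty := fun t => nonempty_Ici.image f
  refine ⟨fun t => sInf (f '' Ici (max t T)), fun t t' h => ?_, ?_, ?_⟩
  · exact csInf_le_csInf (hbdd t) (hne t')
      (image_mono (Ici_subset_Ici.mpr (sup_le_sup_right h T)))
  · refine tendsto_atTop.mpr fun M => ?_
    obtain ⟨T', hT'⟩ := eventually_atTop.mp (hf.eventually_ge_atTop M)
    filter_upwards [eventually_ge_atTop T'] with t ht
    exact le_csInf (hne t) (forall_mem_image.mpr fun z hz => hT' z (ht.trans (le_sup_left.trans hz)))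
  · filter_upwards [eventually_ge_atTop T] with t ht z hz
    exact csInf_le (hbdd t) (mem_image_of_mem f (sup_le hz (ht.trans hz)))

theorem stmt_11_general (φ : ℝ → ℝ)
    (hφ : Filter.Tendsto (fun y => y ^ 2 * φ y) Filter.atTop Filter.atTop) :
    ∃ R : ℝ → ℝ, (∀ y : ℝ, 0 < y → 0 < R y) ∧
      (∀ y z : ℝ, 0 < y → y ≤ z → R y ≤ R z) ∧
      Filter.Tendsto (fun y => y / R y ^ 2) Filter.atTop (nhds 0) ∧
      Filter.Tendsto (fun y => y * φ (R y)) Filter.atTop Filter.atTop := by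
  obtain ⟨g, hg_mono, hg_top, hg_le⟩ := hφ.exists_monotone_tendsto_atTop_le
  set s : ℝ → ℝ := fun y => √(g √y)
  have hs_mono : Monotone s := fun y z h => Real.sqrt_le_sqrt (hg_mono (Real.sqrt_le_sqrt h))
  have hs_top : Tendsto s atTop atTop :=
    Real.tendsto_sqrt_atTop.comp (hg_top.comp Real.tendsto_sqrt_atTop)
  set w : ℝ → ℝ := fun y => max 1 (s y)
  have hw_pos : ∀ y, 0 < w y := fun y => one_pos.trans_le (le_max_left _ _)
  have hR_sq : ∀ y, 0 ≤ y → √(y * w y) ^ 2 = y * w y := fun y hy =>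
    Real.sq_sqrt (mul_nonneg hy (hw_pos y).le)
  refine ⟨fun y => √(y * w y), fun y hy => Real.sqrt_pos.mpr (mul_pos hy (hw_pos y)),
    fun y z hy hyz => Real.sqrt_le_sqrt (mul_le_mul hyz (max_le_max le_rfl (hs_mono hyz))
      (hw_pos y).le (hy.le.trans hyz)), ?_, ?_⟩
  · have hw_top : Tendsto w atTop atTop := tendsto_atTop_mono (fun y => le_max_right _ _) hs_top
    refine (tendsto_inv_atTop_zero.comp hw_top).congr' ?_
    filter_upwards [eventually_gt_atTop 0] with y hy
    simp only [Function.comp_apply, hR_sq y hy.le]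
    field_simp
  · refine tendsto_atTop_mono' atTop ?_ hs_top
    filter_upwards [hs_top.eventually_ge_atTop 1, Real.tendsto_sqrt_atTop.eventually hg_le,
      eventually_ge_atTop 0] with y hs1 hy_le hy
    have hw : w y = s y := max_eq_right hs1
    have hg_nonneg : 0 ≤ g √y := (Real.sqrt_pos.mp (one_pos.trans_le hs1)).le
    have hR : √y ≤ √(y * w y) := Real.sqrt_le_sqrt (le_mul_of_one_le_right hy (le_max_left _ _))
    have hs_sq_le : s y * s y ≤ s y * (y * φ √(y * w y)) := calc
      s y * s y = g √y := Real.mul_self_sqrt hg_nonneg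
      _ ≤ √(y * w y) ^ 2 * φ √(y * w y) := hy_le _ hR
      _ = s y * (y * φ √(y * w y)) := by rw [hR_sq y hy, hw]; ring
    exact le_of_mul_le_mul_left hs_sq_le (one_pos.trans_le hs1)

/-- Gmira–Veron: If `y² φ(y) → ∞` as `y → ∞`, there is a
nondecreasing `R : (0,∞) → (0,∞)` with `y / R(y)² → 0` and `y φ(R(y)) → ∞`. -/
theorem stmt_11 (φ : ℝ → ℝ) (hφpos : ∀ y : ℝ, 0 < y → 0 < φ y)
    (hφ : Filter.Tendsto (fun y => y ^ 2 * φ y) Filter.atTop Filter.atTop) :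
    ∃ R : ℝ → ℝ, (∀ y : ℝ, 0 < y → 0 < R y) ∧
      (∀ y z : ℝ, 0 < y → y ≤ z → R y ≤ R z) ∧
      Filter.Tendsto (fun y => y / R y ^ 2) Filter.atTop (nhds 0) ∧
      Filter.Tendsto (fun y => y * φ (R y)) Filter.atTop Filter.atTop :=
  stmt_11_general φ hφ
end

section
/- Suppose |x|^{2/(p−1)} u_0(x) → ∞ as |x| → ∞. Then for every t > 0, |x|^{2/(p−1)} u(x,t) → ∞ as |x| → ∞. -/
open MeasureTheory Filter

/-- If `|x|^{2/(p−1)} u₀(x) → ∞` as `|x| → ∞`, then for every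
`t > 0`, `|x|^{2/(p−1)} u(x,t) → ∞` as `|x| → ∞`. -/
theorem stmt_12
    (N : ℕ) (hN : 0 < N)
    (J : EuclideanSpace ℝ (Fin N) → ℝ)
    (hJsm : ContDiff ℝ (⊤ : ℕ∞) J)
    (hJsupp : Function.support J ⊆ Metric.closedBall 0 1)
    (hJnn : ∀ x, 0 ≤ J x)
    (hJrad : ∀ x y : EuclideanSpace ℝ (Fin N), ‖x‖ = ‖y‖ → J x = J y)
    (hJint : ∫ x, J x = 1)
    (p : ℝ) (hp : 1 < p)
    (u₀ : EuclideanSpace ℝ (Fin N) → ℝ)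
    (hu₀nn : ∀ x, 0 ≤ u₀ x) (hu₀bd : ∃ M, ∀ x, u₀ x ≤ M)
    (u : EuclideanSpace ℝ (Fin N) → ℝ → ℝ)
    (hubd : ∃ M, ∀ x t, |u x t| ≤ M)
    (hunn : ∀ x t, 0 ≤ t → 0 ≤ u x t)
    (hucont : Continuous fun q : EuclideanSpace ℝ (Fin N) × ℝ => u q.1 q.2)
    (hueq : ∀ x t, 0 < t →
      HasDerivAt (u x) ((∫ y, J (x - y) * (u y t - u x t)) - u x t ^ p) t)
    (huinit : ∀ x, u x 0 = u₀ x)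
    (hgrow : ∀ M : ℝ, ∃ r : ℝ, ∀ x : EuclideanSpace ℝ (Fin N),
      r ≤ ‖x‖ → M ≤ ‖x‖ ^ (2 / (p - 1)) * u₀ x) :
    ∀ t : ℝ, 0 < t → ∀ M : ℝ, ∃ r : ℝ, ∀ x : EuclideanSpace ℝ (Fin N),
      r ≤ ‖x‖ → M ≤ ‖x‖ ^ (2 / (p - 1)) * u x t := by
  obtain ⟨M₀, hM₀⟩ := hubd
  set B : ℝ := max M₀ 1 with hB
  have hB1 : (1 : ℝ) ≤ B := le_max_right _ _
  have hBpos : (0 : ℝ) < B := lt_of_lt_of_le one_pos hB1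
  have hub : ∀ x t, u x t ≤ B := fun x t =>
    (le_abs_self _).trans ((hM₀ x t).trans (le_max_left _ _))
  set C : ℝ := 1 + B ^ (p - 1) with hC
  have hCpos : 0 < C := by
    have : (0:ℝ) < B ^ (p - 1) := Real.rpow_pos_of_pos hBpos _
    linarith
  -- J is integrable
  have hJcs : HasCompactSupport J := by
    apply HasCompactSupport.intro (isCompact_closedBall (0 : EuclideanSpace ℝ (Fin N)) 1)
    intro x hx
    by_contra h
    exact hx (hJsupp h)
  have hJintgr : Integrable J := hJsm.continuous.integrable_of_hasCompactSupport hJcs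
  have hJx : ∀ x : EuclideanSpace ℝ (Fin N), Integrable (fun y => J (x - y)) :=
    fun x => hJintgr.comp_sub_left x
  have hJxint : ∀ x : EuclideanSpace ℝ (Fin N), ∫ y, J (x - y) = 1 := fun x => by
    rw [integral_sub_left_eq_self J volume x, hJint]
  -- the nonlocal term is bounded below by -u x t
  have hLbd : ∀ x t, 0 ≤ t → -(u x t) ≤ ∫ y, J (x - y) * (u y t - u x t) := by
    intro x t ht
    by_cases hi : Integrable (fun y => J (x - y) * (u y t - u x t))
    · have hlow : Integrable (fun y => J (x - y) * (-(u x t))) :=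
        (hJx x).mul_const _
      have hle : ∀ y, J (x - y) * (-(u x t)) ≤ J (x - y) * (u y t - u x t) := by
        intro y
        apply mul_le_mul_of_nonneg_left _ (hJnn _)
        have := hunn y t ht
        linarith
      calc -(u x t) = (∫ y, J (x - y)) * (-(u x t)) := by rw [hJxint x]; ring
        _ = ∫ y, J (x - y) * (-(u x t)) := (integral_mul_const _ _).symm
        _ ≤ ∫ y, J (x - y) * (u y t - u x t) := integral_mono hlow hi hle
    · rw [integral_undef hi]
      have := hunn x t ht
      linarith
  -- the power term is bounded above
  have hpow : ∀ x t, 0 ≤ t → u x t ^ p ≤ B ^ (p - 1) * u x t := by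
    intro x t ht
    rcases eq_or_lt_of_le (hunn x t ht) with h0 | h0
    · rw [← h0, Real.zero_rpow (by positivity), mul_zero]
    · have h1 : u x t ^ p = u x t ^ (p - 1) * u x t := by
        have h2 := Real.rpow_add h0 (p - 1) 1
        rw [Real.rpow_one] at h2
        rw [← h2]
        norm_num
      rw [h1]
      apply mul_le_mul_of_nonneg_right _ (le_of_lt h0)
      exact Real.rpow_le_rpow (le_of_lt h0) (hub x t) (by linarith)
  -- key lower bound: u x t * exp (C t) is monotone on [0, ∞)
  have hkey : ∀ x, ∀ t : ℝ, 0 < t → u₀ x ≤ u x t * Real.exp (C * t) := by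
    intro x t ht
    set g : ℝ → ℝ := fun s => u x s * Real.exp (C * s) with hg
    have hgc : ContinuousOn g (Set.Icc 0 t) := by
      apply Continuous.continuousOn
      exact (hucont.comp (continuous_const.prodMk continuous_id)).mul
        ((continuous_const.mul continuous_id).rexp)
    have hgd : ∀ s ∈ Set.Ioo (0:ℝ) t, HasDerivAt g
        (((∫ y, J (x - y) * (u y s - u x s)) - u x s ^ p) * Real.exp (C * s)
          + u x s * (Real.exp (C * s) * C)) s := by
      intro s hs
      have he : HasDerivAt (fun s : ℝ => Real.exp (C * s)) (Real.exp (C * s) * C) s := by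
        simpa using (((hasDerivAt_id s).const_mul C).exp)
      exact (hueq x s hs.1).mul he
    have hint : interior (Set.Icc (0:ℝ) t) = Set.Ioo 0 t := interior_Icc
    have hmono : MonotoneOn g (Set.Icc 0 t) := by
      apply monotoneOn_of_deriv_nonneg (convex_Icc 0 t) hgc
      · rw [hint]
        exact fun s hs => (hgd s hs).differentiableAt.differentiableWithinAt
      · rw [hint]
        intro s hs
        rw [(hgd s hs).deriv]
        have h1 := hLbd x s hs.1.le
        have h2 := hpow x s hs.1.le
        have h3 : (0:ℝ) < Real.exp (C * s) := Real.exp_pos _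
        have h4 : -(C * u x s) ≤ (∫ y, J (x - y) * (u y s - u x s)) - u x s ^ p := by
          rw [hC]; nlinarith [hunn x s hs.1.le]
        nlinarith
    have := hmono (Set.left_mem_Icc.2 ht.le) (Set.right_mem_Icc.2 ht.le) ht.le
    simpa [hg, huinit x] using this
  -- conclude
  intro t ht M
  obtain ⟨r, hr⟩ := hgrow (M * Real.exp (C * t))
  refine ⟨r, fun x hx => ?_⟩
  have h1 := hr x hx
  have h2 := hkey x t ht
  have h3 : (0:ℝ) < Real.exp (C * t) := Real.exp_pos _
  have h4 : (0:ℝ) ≤ ‖x‖ ^ (2 / (p - 1)) := Real.rpow_nonneg (norm_nonneg x) _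
  have h5 : ‖x‖ ^ (2 / (p - 1)) * u₀ x ≤ ‖x‖ ^ (2 / (p - 1)) * (u x t * Real.exp (C * t)) :=
    mul_le_mul_of_nonneg_left h2 h4
  have h6 : M * Real.exp (C * t) ≤ (‖x‖ ^ (2 / (p - 1)) * u x t) * Real.exp (C * t) := by
    calc M * Real.exp (C * t) ≤ ‖x‖ ^ (2 / (p - 1)) * u₀ x := h1
      _ ≤ ‖x‖ ^ (2 / (p - 1)) * (u x t * Real.exp (C * t)) := h5
      _ = (‖x‖ ^ (2 / (p - 1)) * u x t) * Real.exp (C * t) := by ring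
  exact le_of_mul_le_mul_right h6 h3
end

section
/- Suppose u_0 is not identically zero and, for a fixed t > 0, |x|^{2/(p−1)} u(x,t) → ∞ as |x| → ∞. Then R^{2/(p−1)} · inf_{|x| ≤ R} u(x,t) → ∞ as R → ∞. -/
open MeasureTheory Filter

/-- If `u₀ ≢ 0` and, for a fixed `t > 0`,
`|x|^{2/(p−1)} u(x,t) → ∞` as `|x| → ∞`, then
`R^{2/(p−1)} inf_{|x| ≤ R} u(x,t) → ∞` as `R → ∞`. -/
theorem stmt_13
    (N : ℕ) (hN : 0 < N)
    (J : EuclideanSpace ℝ (Fin N) → ℝ)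
    (hJsm : ContDiff ℝ (⊤ : ℕ∞) J)
    (hJsupp : Function.support J ⊆ Metric.closedBall 0 1)
    (hJnn : ∀ x, 0 ≤ J x)
    (hJrad : ∀ x y : EuclideanSpace ℝ (Fin N), ‖x‖ = ‖y‖ → J x = J y)
    (hJint : ∫ x, J x = 1)
    (p : ℝ) (hp : 1 < p)
    (u₀ : EuclideanSpace ℝ (Fin N) → ℝ)
    (hu₀nn : ∀ x, 0 ≤ u₀ x) (hu₀bd : ∃ M, ∀ x, u₀ x ≤ M)
    (u : EuclideanSpace ℝ (Fin N) → ℝ → ℝ)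
    (hubd : ∃ M, ∀ x t, |u x t| ≤ M)
    (hunn : ∀ x t, 0 ≤ t → 0 ≤ u x t)
    (hucont : Continuous fun q : EuclideanSpace ℝ (Fin N) × ℝ => u q.1 q.2)
    (hueq : ∀ x t, 0 < t →
      HasDerivAt (u x) ((∫ y, J (x - y) * (u y t - u x t)) - u x t ^ p) t)
    (huinit : ∀ x, u x 0 = u₀ x)
    (hu₀ne : ∃ x, u₀ x ≠ 0)
    (t : ℝ) (ht : 0 < t)
    (hgrow : ∀ M : ℝ, ∃ r : ℝ, ∀ x : EuclideanSpace ℝ (Fin N),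
      r ≤ ‖x‖ → M ≤ ‖x‖ ^ (2 / (p - 1)) * u x t) :
    Filter.Tendsto
      (fun R : ℝ => R ^ (2 / (p - 1)) *
        sInf ((fun x => u x t) '' Metric.closedBall (0 : EuclideanSpace ℝ (Fin N)) R))
      Filter.atTop Filter.atTop := by
  classical
  have hE : True := trivial
  obtain ⟨M₀, hM₀⟩ := hubd
  set M : ℝ := max M₀ 1 with hMdef
  have hM1 : (1:ℝ) ≤ M := le_max_right _ _
  have hMb : ∀ x s, u x s ≤ M := fun x s =>
    ((abs_le.mp (hM₀ x s)).2).trans (le_max_left _ _)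
  set C : ℝ := 1 + M ^ (p - 1) with hCdef
  have hJcont : Continuous J := hJsm.continuous
  have hucx : ∀ x : EuclideanSpace ℝ (Fin N), Continuous (u x) := by
    intro x
    exact hucont.comp (Continuous.prodMk_right x)
  -- J vanishes off ball
  have hJzero : ∀ z : EuclideanSpace ℝ (Fin N), 1 < ‖z‖ → J z = 0 := by
    intro z hz
    by_contra h
    have := hJsupp (Function.mem_support.mpr h)
    rw [Metric.mem_closedBall, dist_zero_right] at this
    linarith
  -- integrability
  have hIntJu : ∀ (x : EuclideanSpace ℝ (Fin N)) (σ : ℝ), Integrable (fun y => J (x - y) * u y σ) := by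
    -- continuous with compact support
    intro x σ
    have hc : Continuous (fun y => J (x - y) * u y σ) :=
      (hJcont.comp (continuous_const.sub continuous_id)).mul
        (hucont.comp (continuous_id.prodMk continuous_const))
    have hcs : HasCompactSupport (fun y => J (x - y) * u y σ) := by
      apply HasCompactSupport.intro (isCompact_closedBall x 1)
      intro y hy
      have h1 : 1 < ‖x - y‖ := by
        rw [Metric.mem_closedBall, dist_comm, dist_eq_norm] at hy
        push_neg at hy
        exact hy
      rw [hJzero _ h1, zero_mul]
    exact hc.integrable_of_hasCompactSupport hcs
  have hIntJ : ∀ (x : EuclideanSpace ℝ (Fin N)), Integrable (fun y : EuclideanSpace ℝ (Fin N) => J (x - y)) := by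
    intro x
    have hc : Continuous (fun y : EuclideanSpace ℝ (Fin N) => J (x - y)) :=
      hJcont.comp (continuous_const.sub continuous_id)
    have hcs : HasCompactSupport (fun y : EuclideanSpace ℝ (Fin N) => J (x - y)) := by
      apply HasCompactSupport.intro (isCompact_closedBall x 1)
      intro y hy
      have h1 : 1 < ‖x - y‖ := by
        rw [Metric.mem_closedBall, dist_comm, dist_eq_norm] at hy
        push_neg at hy
        exact hy
      exact hJzero _ h1
    exact hc.integrable_of_hasCompactSupport hcs
  have hJ1 : ∀ x : EuclideanSpace ℝ (Fin N), ∫ y, J (x - y) = 1 := by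
    intro x; rw [integral_sub_left_eq_self J volume x]; exact hJint
  -- derivative rewriting
  have hderiv : ∀ (x : EuclideanSpace ℝ (Fin N)) (σ : ℝ), 0 < σ →
      HasDerivAt (u x) ((∫ y, J (x - y) * u y σ) - u x σ - u x σ ^ p) σ := by
    intro x σ hσ
    have h := hueq x σ hσ
    have heq : (∫ y, J (x - y) * (u y σ - u x σ)) = (∫ y, J (x - y) * u y σ) - u x σ := by
      have h2 : (fun y => J (x - y) * (u y σ - u x σ)) =
          fun y => J (x - y) * u y σ - J (x - y) * u x σ := funext fun y => mul_sub _ _ _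
      rw [h2, integral_sub (hIntJu x σ) ((hIntJ x).mul_const _), integral_mul_const,
        hJ1 x, one_mul]
    rw [heq] at h
    exact h
  -- remainder nonneg
  have hrem : ∀ (x : EuclideanSpace ℝ (Fin N)) (σ : ℝ), 0 ≤ σ → 0 ≤ C * u x σ - u x σ - u x σ ^ p := by
    intro x σ hσ
    have ha0 : 0 ≤ u x σ := hunn _ _ hσ
    have haM := hMb x σ
    have h1 : u x σ ^ p = u x σ ^ (p - 1) * u x σ := by
      have h0 := Real.rpow_add_one' (y := p - 1) ha0 (by intro h; nlinarith)
      rwa [show p - 1 + 1 = p by ring] at h0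
    have h2 : u x σ ^ (p - 1) ≤ M ^ (p - 1) :=
      Real.rpow_le_rpow ha0 haM (by linarith)
    have h3 : u x σ ^ (p - 1) * u x σ ≤ M ^ (p - 1) * u x σ :=
      mul_le_mul_of_nonneg_right h2 ha0
    have h4 : C * u x σ - u x σ = M ^ (p - 1) * u x σ := by rw [hCdef]; ring
    rw [h4]
    linarith [h1 ▸ h3]
  have hInn : ∀ (x : EuclideanSpace ℝ (Fin N)) (σ : ℝ), 0 ≤ σ → 0 ≤ ∫ y, J (x - y) * u y σ := by
    intro x σ hσ
    exact integral_nonneg fun y => mul_nonneg (hJnn _) (hunn y σ hσ)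
  -- the auxiliary function g
  have hgderiv : ∀ (x : EuclideanSpace ℝ (Fin N)) (σ : ℝ), 0 < σ →
      HasDerivAt (fun s => Real.exp (C * s) * u x s)
        (Real.exp (C * σ) * ((∫ y, J (x - y) * u y σ) + (C * u x σ - u x σ - u x σ ^ p))) σ := by
    intro x σ hσ
    have h1 : HasDerivAt (fun s : ℝ => Real.exp (C * s)) (Real.exp (C * σ) * C) σ := by
      exact (((hasDerivAt_id' σ).const_mul C).exp).congr_deriv (by ring)
    have h2 := h1.mul (hderiv x σ hσ)
    exact h2.congr_deriv (by ring)
  have hgcont : ∀ x : EuclideanSpace ℝ (Fin N), ContinuousOn (fun s => Real.exp (C * s) * u x s) (Set.Icc 0 t) := by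
    intro x
    exact ((Real.continuous_exp.comp (continuous_const.mul continuous_id)).mul (hucx x)).continuousOn
  have hgmono : ∀ x : EuclideanSpace ℝ (Fin N), MonotoneOn (fun s => Real.exp (C * s) * u x s) (Set.Icc 0 t) := by
    intro x
    apply monotoneOn_of_deriv_nonneg (convex_Icc 0 t) (hgcont x)
    · intro σ hσ
      rw [interior_Icc] at hσ
      exact ((hgderiv x σ hσ.1).differentiableAt).differentiableWithinAt
    · intro σ hσ
      rw [interior_Icc] at hσ
      rw [(hgderiv x σ hσ.1).deriv]
      have h1 := hInn x σ hσ.1.le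
      have h2 := hrem x σ hσ.1.le
      have h3 := (Real.exp_pos (C * σ)).le
      exact mul_nonneg h3 (by linarith)
  -- the positivity predicate
  set P : EuclideanSpace ℝ (Fin N) → Prop := fun x => ∀ σ : ℝ, 0 < σ → σ ≤ t → 0 < u x σ with hPdef
  have hPbase : ∀ x : EuclideanSpace ℝ (Fin N), 0 < u₀ x → P x := by
    intro x hx σ hσ hσt
    have h0 : (0:ℝ) ∈ Set.Icc (0:ℝ) t := Set.mem_Icc.mpr ⟨le_rfl, ht.le⟩
    have hσm : σ ∈ Set.Icc (0:ℝ) t := Set.mem_Icc.mpr ⟨hσ.le, hσt⟩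
    have := hgmono x h0 hσm hσ.le
    simp only [mul_zero, Real.exp_zero, one_mul, huinit] at this
    have hexp : 0 < Real.exp (C * σ) := Real.exp_pos _
    nlinarith
  have hPstep : ∀ x y₀ : EuclideanSpace ℝ (Fin N), 0 < J (x - y₀) → P y₀ → P x := by
    intro x y₀ hJpos hPy σ hσ hσt
    have hsm : StrictMonoOn (fun s => Real.exp (C * s) * u x s) (Set.Icc 0 t) := by
      apply strictMonoOn_of_deriv_pos (convex_Icc 0 t) (hgcont x)
      intro σ' hσ'
      rw [interior_Icc] at hσ'
      rw [(hgderiv x σ' hσ'.1).deriv]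
      have hI : 0 < ∫ y, J (x - y) * u y σ' := by
        have hnn : (0:EuclideanSpace ℝ (Fin N) → ℝ) ≤ fun y => J (x - y) * u y σ' :=
          fun y => mul_nonneg (hJnn _) (hunn y σ' hσ'.1.le)
        rw [integral_pos_iff_support_of_nonneg hnn (hIntJu x σ')]
        have hc : Continuous (fun y => J (x - y) * u y σ') :=
          (hJcont.comp (continuous_const.sub continuous_id)).mul
            (hucont.comp (continuous_id.prodMk continuous_const))
        have hopen : IsOpen (Function.support fun y => J (x - y) * u y σ') := by
          rw [Function.support_eq_preimage]
          exact isOpen_compl_singleton.preimage hc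
        apply hopen.measure_pos volume
        refine ⟨y₀, ?_⟩
        have hy := hPy σ' hσ'.1 hσ'.2.le
        exact Function.mem_support.mpr (mul_pos hJpos hy).ne'
      have hr := hrem x σ' hσ'.1.le
      have he := Real.exp_pos (C * σ')
      nlinarith
    have h0 : (0:ℝ) ∈ Set.Icc (0:ℝ) t := Set.mem_Icc.mpr ⟨le_rfl, ht.le⟩
    have hσm : σ ∈ Set.Icc (0:ℝ) t := Set.mem_Icc.mpr ⟨hσ.le, hσt⟩
    have hlt := hsm h0 hσm hσ
    simp only [mul_zero, Real.exp_zero, one_mul] at hlt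
    have h00 : 0 ≤ u x 0 := hunn x 0 le_rfl
    have hexp := Real.exp_pos (C * σ)
    nlinarith
  -- geometric propagation
  have hgeo : ∃ δ₀ > (0:ℝ), ∀ (y w : EuclideanSpace ℝ (Fin N)), ‖w‖ < δ₀ → P y → P (y + w) := by
    obtain ⟨z₀, hz₀⟩ : ∃ z, J z ≠ 0 := by
      by_contra h
      push_neg at h
      have : ∫ x, J x = 0 := by simp [h]
      rw [this] at hJint
      norm_num at hJint
    have hz₀pos : 0 < J z₀ := lt_of_le_of_ne (hJnn z₀) (Ne.symm hz₀)
    have hopen : IsOpen {z : EuclideanSpace ℝ (Fin N) | 0 < J z} :=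
      isOpen_lt continuous_const hJcont
    obtain ⟨ε, hε, hball⟩ := Metric.isOpen_iff.mp hopen z₀ hz₀pos
    by_cases hρ : ‖z₀‖ = 0
    · refine ⟨ε, hε, ?_⟩
      intro y w hw hPy
      rcases eq_or_ne w 0 with rfl | hw0
      · simpa using hPy
      · apply hPstep (y + w) y _ hPy
        rw [add_sub_cancel_left]
        apply hball
        rw [Metric.mem_ball, dist_eq_norm, norm_eq_zero.mp hρ, sub_zero]
        exact hw
    · have hρpos : 0 < ‖z₀‖ := lt_of_le_of_ne (norm_nonneg _) (Ne.symm hρ)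
      refine ⟨min ε ‖z₀‖, lt_min hε hρpos, ?_⟩
      intro y w hw hPy
      rcases eq_or_ne w 0 with rfl | hw0
      · simpa using hPy
      have hwε : ‖w‖ < ε := lt_of_lt_of_le hw (min_le_left _ _)
      have hwρ : ‖w‖ < ‖z₀‖ := lt_of_lt_of_le hw (min_le_right _ _)
      have hwpos : 0 < ‖w‖ := norm_pos_iff.mpr hw0
      set v : EuclideanSpace ℝ (Fin N) := ‖w‖⁻¹ • w with hv_def
      have hv : ‖v‖ = 1 := by
        rw [hv_def, norm_smul, Real.norm_eq_abs, abs_of_pos (inv_pos.mpr hwpos)]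
        field_simp
      have hwv : w = ‖w‖ • v := by
        rw [hv_def, smul_smul, mul_inv_cancel₀ hwpos.ne', one_smul]
      have hmid : P (y + ‖z₀‖ • v) := by
        apply hPstep _ y _ hPy
        rw [add_sub_cancel_left]
        have hn : ‖(‖z₀‖ • v)‖ = ‖z₀‖ := by
          rw [norm_smul, hv, mul_one, Real.norm_eq_abs, abs_of_pos hρpos]
        rw [hJrad _ _ hn]
        exact hz₀pos
      apply hPstep _ (y + ‖z₀‖ • v) _ hmid
      have hw' : y + w - (y + ‖z₀‖ • v) = (‖w‖ - ‖z₀‖) • v := by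
        rw [sub_smul, ← hwv]
        abel
      set z : EuclideanSpace ℝ (Fin N) := ((‖z₀‖ - ‖w‖) / ‖z₀‖) • z₀ with hz_def
      have hzn : ‖z‖ = ‖z₀‖ - ‖w‖ := by
        rw [hz_def, norm_smul, Real.norm_eq_abs, abs_of_nonneg (div_nonneg (by linarith) hρpos.le)]
        field_simp
      have hznear : z ∈ Metric.ball z₀ ε := by
        rw [Metric.mem_ball, dist_eq_norm]
        have h5 : z - z₀ = ((‖z₀‖ - ‖w‖) / ‖z₀‖ - 1) • z₀ := by
          rw [hz_def, sub_smul, one_smul]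
        rw [h5, norm_smul, Real.norm_eq_abs]
        have h6 : |(‖z₀‖ - ‖w‖) / ‖z₀‖ - 1| = ‖w‖ / ‖z₀‖ := by
          rw [abs_of_nonpos]
          · field_simp; ring
          · rw [sub_nonpos, div_le_one hρpos]
            linarith
        rw [h6, div_mul_cancel₀ _ hρpos.ne']
        exact hwε
      have hJz : 0 < J z := hball hznear
      have hnorm : ‖y + w - (y + ‖z₀‖ • v)‖ = ‖z‖ := by
        rw [hw', hzn, norm_smul, hv, mul_one, Real.norm_eq_abs, abs_of_nonpos (by linarith)]
        ring
      rw [hJrad _ _ hnorm]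
      exact hJz
  have hPall : ∀ x : EuclideanSpace ℝ (Fin N), P x := by
    obtain ⟨x₁, hx₁⟩ := hu₀ne
    have hx₁pos : 0 < u₀ x₁ := lt_of_le_of_ne (hu₀nn x₁) (Ne.symm hx₁)
    obtain ⟨δ₀, hδ₀, hstep⟩ := hgeo
    intro x
    obtain ⟨n, hn⟩ := exists_nat_gt (‖x - x₁‖ / δ₀)
    have hn0 : 0 < n := by
      rcases Nat.eq_zero_or_pos n with rfl | h
      · exfalso
        have : 0 ≤ ‖x - x₁‖ / δ₀ := by positivity
        simp at hn
        linarith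
      · exact h
    have hnp : (0:ℝ) < n := Nat.cast_pos.mpr hn0
    have key : ∀ k : ℕ, k ≤ n → P (x₁ + ((k:ℝ)/n) • (x - x₁)) := by
      intro k
      induction k with
      | zero =>
        intro _
        simpa using hPbase x₁ hx₁pos
      | succ k ih =>
        intro hk
        have hPk := ih (Nat.le_of_succ_le hk)
        have heq : x₁ + (((k:ℕ)+1:ℝ)/n) • (x - x₁) =
            (x₁ + ((k:ℝ)/n) • (x - x₁)) + ((1:ℝ)/n) • (x - x₁) := by
          rw [add_assoc, ← add_smul]
          congr 1
          field_simp
        have hnorm : ‖((1:ℝ)/n) • (x - x₁)‖ < δ₀ := by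
          rw [norm_smul, Real.norm_eq_abs, abs_of_pos (by positivity)]
          rw [div_mul_eq_mul_div, one_mul, div_lt_iff₀ hnp]
          have := (div_lt_iff₀ hδ₀).mp hn
          linarith
        have := hstep _ _ hnorm hPk
        rw [← heq] at this
        convert this using 4
        push_cast
        ring
    have hfin := key n le_rfl
    rw [div_self hnp.ne', one_smul] at hfin
    have : x₁ + (x - x₁) = x := by abel
    rwa [this] at hfin
  have hpos : ∀ x : EuclideanSpace ℝ (Fin N), 0 < u x t := fun x => hPall x t ht le_rfl
  -- main conclusion
  rw [tendsto_atTop]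
  intro M'
  set M₁ : ℝ := max M' 1 with hM₁def
  have hM₁1 : (1:ℝ) ≤ M₁ := le_max_right _ _
  have hM₁pos : (0:ℝ) < M₁ := lt_of_lt_of_le one_pos hM₁1
  set α : ℝ := 2 / (p - 1) with hαdef
  have hαpos : 0 < α := div_pos two_pos (by linarith)
  obtain ⟨r, hr⟩ := hgrow M₁
  have hK : IsCompact (Metric.closedBall (0:EuclideanSpace ℝ (Fin N)) (max r 0)) :=
    isCompact_closedBall _ _
  have hKne : (Metric.closedBall (0:EuclideanSpace ℝ (Fin N)) (max r 0)).Nonempty :=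
    ⟨0, Metric.mem_closedBall_self (le_max_right r 0)⟩
  have hcu : Continuous (fun x : EuclideanSpace ℝ (Fin N) => u x t) :=
    hucont.comp (continuous_id.prodMk continuous_const)
  obtain ⟨xm, hxmK, hxmmin⟩ := hK.exists_isMinOn hKne hcu.continuousOn
  have hm : 0 < u xm t := hpos xm
  set R₀ : ℝ := max (max (max r 0) 1) ((M₁ / u xm t) ^ α⁻¹) with hR₀def
  rw [eventually_atTop]
  refine ⟨R₀, fun R hR => ?_⟩
  have hmax1 : max (max r 0) 1 ≤ R := le_trans (le_max_left _ _) hR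
  have hR1 : (1:ℝ) ≤ R := le_trans (le_max_right _ _) hmax1
  have hRpos : (0:ℝ) < R := lt_of_lt_of_le one_pos hR1
  have hRr : max r 0 ≤ R := le_trans (le_max_left _ _) hmax1
  have hRM : (M₁ / u xm t) ^ α⁻¹ ≤ R := le_trans (le_max_right _ _) hR
  have hB : IsCompact (Metric.closedBall (0:EuclideanSpace ℝ (Fin N)) R) :=
    isCompact_closedBall _ _
  have hBne : (Metric.closedBall (0:EuclideanSpace ℝ (Fin N)) R).Nonempty :=
    ⟨0, Metric.mem_closedBall_self hRpos.le⟩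
  obtain ⟨x₀, hx₀B, hmin⟩ := hB.exists_sInf_image_eq hBne hcu.continuousOn
  rw [hmin]
  have hux₀ : 0 < u x₀ t := hpos x₀
  have hx₀R : ‖x₀‖ ≤ R := by rwa [Metric.mem_closedBall, dist_zero_right] at hx₀B
  have hM' : M' ≤ M₁ := le_max_left _ _
  refine le_trans hM' ?_
  by_cases hcase : r ≤ ‖x₀‖
  · refine le_trans (hr x₀ hcase) ?_
    exact mul_le_mul_of_nonneg_right
      (Real.rpow_le_rpow (norm_nonneg _) hx₀R hαpos.le) hux₀.le
  · push_neg at hcase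
    have hx₀K : x₀ ∈ Metric.closedBall (0:EuclideanSpace ℝ (Fin N)) (max r 0) := by
      rw [Metric.mem_closedBall, dist_zero_right]
      exact le_trans hcase.le (le_max_left _ _)
    have hum : u xm t ≤ u x₀ t := hxmmin hx₀K
    have hRα : M₁ / u xm t ≤ R ^ α := by
      calc M₁ / u xm t = ((M₁ / u xm t) ^ α⁻¹) ^ α :=
            (Real.rpow_inv_rpow (div_nonneg hM₁pos.le hm.le) hαpos.ne').symm
        _ ≤ R ^ α := Real.rpow_le_rpow (Real.rpow_nonneg (div_nonneg hM₁pos.le hm.le) _) hRM hαpos.le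
    calc M₁ = (M₁ / u xm t) * u xm t := (div_mul_cancel₀ _ hm.ne').symm
      _ ≤ R ^ α * u xm t := mul_le_mul_of_nonneg_right hRα hm.le
      _ ≤ R ^ α * u x₀ t := mul_le_mul_of_nonneg_left hum (Real.rpow_nonneg hRpos.le _)
end

section
/- For every x ∈ ℝ^N and every t > 0, u(x,t) ≤ ((p−1)t)^{−1/(p−1)}; equivalently, t^{1/(p−1)} u(x,t) ≤ (1/(p−1))^{1/(p−1)} for all x ∈ ℝ^N and t > 0. -/
open MeasureTheory Filter

lemma aux_mvt {f f' : ℝ → ℝ} {a b B : ℝ} (hab : a ≤ b)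
    (hf : ∀ t ∈ Set.Icc a b, HasDerivAt f (f' t) t)
    (hB : ∀ t ∈ Set.Icc a b, f' t ≤ B) :
    f b - f a ≤ B * (b - a) := by
  have hg : MonotoneOn (fun t => B * t - f t) (Set.Icc a b) := by
    have hd : ∀ t ∈ Set.Icc a b, HasDerivAt (fun t => B * t - f t) (B - f' t) t := by
      intro t ht
      have h := ((hasDerivAt_id t).const_mul B).sub (hf t ht)
      rw [mul_one] at h
      exact h
    apply monotoneOn_of_deriv_nonneg (convex_Icc a b)
    · exact fun t ht => (hd t ht).continuousAt.continuousWithinAt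
    · intro t ht
      rw [interior_Icc] at ht
      exact ((hd t (Set.Ioo_subset_Icc_self ht)).differentiableAt).differentiableWithinAt
    · intro t ht
      rw [interior_Icc] at ht
      rw [(hd t (Set.Ioo_subset_Icc_self ht)).deriv]
      have := hB t (Set.Ioo_subset_Icc_self ht)
      linarith
  have := hg (Set.left_mem_Icc.2 hab) (Set.right_mem_Icc.2 hab) hab
  simp only at this
  linarith

lemma aux_tangent {a b p : ℝ} (ha : 0 < a) (hb : 0 ≤ b) (hp : 1 ≤ p) :
    a ^ p - b ^ p ≤ p * a ^ (p - 1) * (a - b) := by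
  have hs : (-1 : ℝ) ≤ b / a - 1 := by
    have : 0 ≤ b / a := div_nonneg hb ha.le
    linarith
  have key := one_add_mul_self_le_rpow_one_add hs hp
  rw [add_sub_cancel] at key
  rw [Real.div_rpow hb ha.le p] at key
  have hap : (0:ℝ) < a ^ p := Real.rpow_pos_of_pos ha p
  have h2 : (1 + p * (b / a - 1)) * a ^ p ≤ b ^ p := (le_div_iff₀ hap).mp key
  have h3 : a ^ p / a = a ^ (p - 1) := by
    rw [Real.rpow_sub ha, Real.rpow_one]
  have h5 : a ^ p = a ^ (p-1) * a := by
    rw [← h3, div_mul_cancel₀ _ ha.ne']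
  have h4 : a ^ p * (b / a) = a ^ (p-1) * b := by
    field_simp
    nth_rewrite 1 [h5]; ring
  calc a ^ p - b ^ p ≤ p * a ^ p - p * (a ^ p * (b/a)) := by linarith [h2]
    _ = p * a ^ (p-1) * (a - b) := by rw [h4]; nth_rewrite 1 [h5]; ring

lemma aux_psi {p a t : ℝ} (hp : 1 < p) (ht : a < t) :
    HasDerivAt (fun s => ((p-1)*(s-a)) ^ (-(1/(p-1))))
      (-((((p-1)*(t-a)) ^ (-(1/(p-1)))) ^ p)) t := by
  have hp1 : (0:ℝ) < p - 1 := by linarith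
  set q : ℝ := 1/(p-1) with hq
  have hqp : q * (p-1) = 1 := by rw [hq, one_div, inv_mul_cancel₀ hp1.ne']
  have hX : 0 < (p-1)*(t-a) := mul_pos hp1 (by linarith)
  have hg : HasDerivAt (fun s => (p-1)*(s-a)) ((p-1)*1) t :=
    ((hasDerivAt_id t).sub_const a).const_mul (p-1)
  rw [mul_one] at hg
  have h := hg.rpow_const (p := -q) (Or.inl hX.ne')
  convert h using 1
  have h1 : (((p-1)*(t-a)) ^ (-q)) ^ p = ((p-1)*(t-a)) ^ ((-q)*p) :=
    (Real.rpow_mul hX.le (-q) p).symm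
  have h2 : (-q)*p = -q-1 := by nlinarith [hqp]
  have h3 : (p-1) * -q = -1 := by nlinarith [hqp]
  rw [h1, h2, h3, neg_one_mul]

set_option maxHeartbeats 1000000 in
theorem stmt_17
    (N : ℕ) (hN : 0 < N)
    (J : EuclideanSpace ℝ (Fin N) → ℝ)
    (hJsm : ContDiff ℝ (⊤ : ℕ∞) J)
    (hJsupp : Function.support J ⊆ Metric.closedBall 0 1)
    (hJnn : ∀ x, 0 ≤ J x)
    (hJrad : ∀ x y : EuclideanSpace ℝ (Fin N), ‖x‖ = ‖y‖ → J x = J y)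
    (hJint : ∫ x, J x = 1)
    (p : ℝ) (hp : 1 < p)
    (u₀ : EuclideanSpace ℝ (Fin N) → ℝ)
    (hu₀nn : ∀ x, 0 ≤ u₀ x) (hu₀bd : ∃ M, ∀ x, u₀ x ≤ M)
    (u : EuclideanSpace ℝ (Fin N) → ℝ → ℝ)
    (hubd : ∃ M, ∀ x t, |u x t| ≤ M)
    (hunn : ∀ x t, 0 ≤ t → 0 ≤ u x t)
    (hucont : Continuous fun q : EuclideanSpace ℝ (Fin N) × ℝ => u q.1 q.2)
    (hueq : ∀ x t, 0 < t →
      HasDerivAt (u x) ((∫ y, J (x - y) * (u y t - u x t)) - u x t ^ p) t)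
    (huinit : ∀ x, u x 0 = u₀ x)
    :
    ∀ x : EuclideanSpace ℝ (Fin N), ∀ t : ℝ, 0 < t →
      u x t ≤ ((p - 1) * t) ^ (-(1 / (p - 1))) := by
  obtain ⟨M₀, hM₀⟩ := hubd
  set M : ℝ := max M₀ 1 with hMdef
  have hM1 : (1:ℝ) ≤ M := le_max_right _ _
  have hM0 : (0:ℝ) < M := lt_of_lt_of_le one_pos hM1
  have hub : ∀ x t, |u x t| ≤ M := fun x t => (hM₀ x t).trans (le_max_left _ _)
  have huleM : ∀ x t, u x t ≤ M := fun x t => (le_abs_self _).trans (hub x t)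
  have hp1 : (0:ℝ) < p - 1 := by linarith
  have hp0 : (0:ℝ) < p := by linarith
  -- the kernel
  have hJc : Continuous J := hJsm.continuous
  have hJcs : HasCompactSupport J := by
    apply HasCompactSupport.intro (isCompact_closedBall (0:EuclideanSpace ℝ (Fin N)) 1)
    intro x hx
    by_contra h
    exact hx (hJsupp (Function.mem_support.2 h))
  have hJinteg : Integrable J := hJc.integrable_of_hasCompactSupport hJcs
  have hJx : ∀ x : EuclideanSpace ℝ (Fin N), Integrable (fun y => J (x - y)) :=
    fun x => hJinteg.comp_sub_left x
  have hJxint : ∀ x : EuclideanSpace ℝ (Fin N), ∫ y, J (x - y) = 1 :=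
    fun x => (integral_sub_left_eq_self J volume x).trans hJint
  have hcontx : ∀ t, Continuous (fun y => u y t) :=
    fun t => hucont.comp (continuous_id.prodMk continuous_const)
  have hint1 : ∀ x t, Integrable (fun y => J (x - y) * (u y t - u x t)) := by
    intro x t
    have h1 : Integrable (fun y => (u y t - u x t) * J (x - y)) := by
      apply (hJx x).bdd_mul (c := 2*M) ((hcontx t).sub continuous_const).aestronglyMeasurable
      refine Filter.Eventually.of_forall (fun y => ?_)
      rw [Real.norm_eq_abs]
      have := hub y t; have := hub x t
      have := abs_sub (u y t) (u x t)
      calc |u y t - u x t| ≤ |u y t| + |u x t| := abs_sub _ _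
        _ ≤ 2*M := by linarith
    simpa [mul_comm] using h1
  -- the sup function
  set S : ℝ → ℝ := fun t => ⨆ x, u x t with hSdef
  have hbdd : ∀ t, BddAbove (Set.range fun x => u x t) := by
    intro t; exact ⟨M, by rintro z ⟨x, rfl⟩; exact huleM x t⟩
  have huS : ∀ x t, u x t ≤ S t := fun x t => le_ciSup (hbdd t) x
  have hSM : ∀ t, S t ≤ M := fun t => ciSup_le fun x => huleM x t
  -- bound of the nonlocal term by S
  have hIle : ∀ x t, (∫ y, J (x - y) * (u y t - u x t)) ≤ S t - u x t := by
    intro x t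
    have hmono : ∀ y, J (x - y) * (u y t - u x t) ≤ J (x - y) * (S t - u x t) := by
      intro y
      apply mul_le_mul_of_nonneg_left _ (hJnn _)
      have := huS y t; linarith
    have h2 : (∫ y, J (x - y) * (u y t - u x t)) ≤ ∫ y, J (x - y) * (S t - u x t) :=
      integral_mono (hint1 x t) ((hJx x).mul_const _) hmono
    rwa [integral_mul_const, hJxint x, one_mul] at h2
  -- absolute bound of the nonlocal term
  have hIabs : ∀ x t, |∫ y, J (x - y) * (u y t - u x t)| ≤ 2*M := by
    intro x t
    have h1 : |∫ y, J (x - y) * (u y t - u x t)| ≤ ∫ y, |J (x - y) * (u y t - u x t)| := by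
      have := norm_integral_le_integral_norm (μ := volume)
        (fun y => J (x - y) * (u y t - u x t))
      simpa only [Real.norm_eq_abs] using this
    have h2 : (∫ y, |J (x - y) * (u y t - u x t)|) ≤ ∫ y, J (x - y) * (2*M) := by
      apply integral_mono (hint1 x t).abs ((hJx x).mul_const _)
      intro y
      dsimp only
      rw [abs_mul, abs_of_nonneg (hJnn _)]
      apply mul_le_mul_of_nonneg_left _ (hJnn _)
      calc |u y t - u x t| ≤ |u y t| + |u x t| := abs_sub _ _
        _ ≤ 2*M := by linarith [hub y t, hub x t]
    rw [integral_mul_const, hJxint x, one_mul] at h2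
    linarith
  set K : ℝ := 2*M + M^p with hKdef
  have hMp0 : (0:ℝ) < M^p := Real.rpow_pos_of_pos hM0 p
  have hK0 : (0:ℝ) < K := by positivity
  have hup : ∀ x t, 0 ≤ t → u x t ^ p ≤ M ^ p :=
    fun x t ht => Real.rpow_le_rpow (hunn x t ht) (huleM x t) hp0.le
  have hupnn : ∀ x t, 0 ≤ t → (0:ℝ) ≤ u x t ^ p :=
    fun x t ht => Real.rpow_nonneg (hunn x t ht) p
  -- Lipschitz bound for u in time
  have hulip : ∀ x t₁ t₂, 0 < t₁ → t₁ ≤ t₂ → |u x t₂ - u x t₁| ≤ K * (t₂ - t₁) := by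
    intro x t₁ t₂ ht₁ h12
    have hmem : ∀ τ ∈ Set.Icc t₁ t₂, 0 < τ := fun τ hτ => lt_of_lt_of_le ht₁ hτ.1
    have hd : ∀ τ ∈ Set.Icc t₁ t₂,
        HasDerivAt (u x) ((∫ y, J (x - y) * (u y τ - u x τ)) - u x τ ^ p) τ :=
      fun τ hτ => hueq x τ (hmem τ hτ)
    have hB : ∀ τ ∈ Set.Icc t₁ t₂,
        ((∫ y, J (x - y) * (u y τ - u x τ)) - u x τ ^ p) ≤ K := by
      intro τ hτ
      have h1 := hIabs x τ
      have h2 := hupnn x τ (hmem τ hτ).le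
      rw [abs_le] at h1
      rw [hKdef]; linarith [h1.2]
    have hB' : ∀ τ ∈ Set.Icc t₁ t₂,
        -((∫ y, J (x - y) * (u y τ - u x τ)) - u x τ ^ p) ≤ K := by
      intro τ hτ
      have h1 := hIabs x τ
      have h2 := hup x τ (hmem τ hτ).le
      rw [abs_le] at h1
      rw [hKdef]; linarith [h1.1]
    have hu1 := aux_mvt h12 hd hB
    have hu2 := aux_mvt h12 (fun τ hτ => (hd τ hτ).neg) (fun τ hτ => by
      simpa using hB' τ hτ)
    rw [abs_le]
    constructor <;> [skip; linarith]
    have : -(u x t₂) - -(u x t₁) ≤ K * (t₂ - t₁) := hu2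
    linarith
  -- Lipschitz bound for S in time
  have hSlip : ∀ t₁ t₂, 0 < t₁ → t₁ ≤ t₂ → S t₂ ≤ S t₁ + K * (t₂ - t₁) := by
    intro t₁ t₂ ht₁ h12
    apply ciSup_le
    intro x
    have h1 := hulip x t₁ t₂ ht₁ h12
    rw [abs_le] at h1
    have := huS x t₁
    linarith [h1.2]
  -- main part
  intro x₀ t₀ ht₀
  have hMpow : ((M^((1:ℝ)-p) : ℝ)) ^ (-(1/(p-1))) = M := by
    rw [← Real.rpow_mul hM0.le]
    rw [show ((1:ℝ)-p)*(-(1/(p-1))) = 1 by field_simp; ring]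
    exact Real.rpow_one M
  suffices hF : ∀ a ∈ Set.Ioo (0:ℝ) t₀, u x₀ t₀ ≤ ((p-1)*(t₀-a)) ^ (-(1/(p-1))) by
    have hcont : ContinuousAt (fun a : ℝ => ((p-1)*(t₀-a)) ^ (-(1/(p-1)))) 0 := by
      apply ContinuousAt.rpow_const
      · exact (continuous_const.mul (continuous_const.sub continuous_id)).continuousAt
      · left
        show (p-1)*(t₀ - 0) ≠ 0
        rw [sub_zero]
        exact (mul_pos hp1 ht₀).ne'
    have hne : (nhdsWithin (0:ℝ) (Set.Ioo 0 t₀)).NeBot := left_nhdsWithin_Ioo_neBot ht₀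
    have htend : Tendsto (fun a : ℝ => ((p-1)*(t₀-a)) ^ (-(1/(p-1))))
        (nhdsWithin 0 (Set.Ioo 0 t₀)) (nhds (((p-1)*(t₀-0)) ^ (-(1/(p-1))))) :=
      hcont.tendsto.mono_left nhdsWithin_le_nhds
    have hfin := ge_of_tendsto htend (Filter.eventually_of_mem self_mem_nhdsWithin hF)
    simpa using hfin
  intro a ha
  obtain ⟨ha0, hat⟩ := ha
  set η : ℝ := M^((1:ℝ)-p)/(p-1) with hηdef
  have hη0 : 0 < η := div_pos (Real.rpow_pos_of_pos hM0 _) hp1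
  have hMeta : (p-1) * η = M^((1:ℝ)-p) := by
    rw [hηdef, mul_div_cancel₀ _ hp1.ne']
  set ψ : ℝ → ℝ := fun t => ((p-1)*(t-a)) ^ (-(1/(p-1))) with hψdef
  show u x₀ t₀ ≤ ψ t₀
  have hψd : ∀ t, a < t → HasDerivAt ψ (-(ψ t ^ p)) t := fun t ht => aux_psi hp ht
  have hψpos : ∀ t, a < t → 0 < ψ t :=
    fun t ht => Real.rpow_pos_of_pos (mul_pos hp1 (by linarith)) _
  have hψval : ∀ t, a < t → (p-1)*(t-a) ≤ M^((1:ℝ)-p) → M ≤ ψ t := by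
    intro t ht hle
    have h1 : (M^((1:ℝ)-p) : ℝ) ^ (-(1/(p-1))) ≤ ψ t :=
      Real.rpow_le_rpow_of_nonpos (mul_pos hp1 (by linarith)) hle
        (neg_nonpos.2 (by positivity))
    rw [hMpow] at h1
    exact h1
  by_cases hcase : t₀ ≤ a + η
  · refine le_trans (huleM x₀ t₀) (hψval t₀ (by linarith) ?_)
    calc (p-1)*(t₀-a) ≤ (p-1)*η := by nlinarith
      _ = M^((1:ℝ)-p) := hMeta
  push_neg at hcase
  set s : ℝ := a + η with hsdef
  have hs0 : 0 < s := by rw [hsdef]; linarith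
  have hsa : a < s := by rw [hsdef]; linarith
  have hst : s < t₀ := hcase
  have hψsM : ψ s = M := by
    have hbase : (p-1)*(s-a) = M^((1:ℝ)-p) := by
      rw [hsdef, add_sub_cancel_left, hMeta]
    show ((p-1)*(s-a)) ^ (-(1/(p-1))) = M
    rw [hbase, hMpow]
  -- monotonicity and Lipschitz facts for ψ on [s, ∞)
  have hψanti : ∀ t₁ t₂, s ≤ t₁ → t₁ ≤ t₂ → ψ t₂ ≤ ψ t₁ := by
    intro t₁ t₂ h1 h2
    have := aux_mvt (f' := fun τ => -(ψ τ ^ p)) h2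
      (fun τ hτ => hψd τ (by linarith [hτ.1]))
      (fun τ hτ => neg_nonpos.2 (Real.rpow_nonneg (hψpos τ (by linarith [hτ.1])).le p))
    linarith [this]
  have hψleM : ∀ t, s ≤ t → ψ t ≤ M := fun t ht => by
    have := hψanti s t le_rfl ht; linarith [hψsM]
  have hψpp : ∀ t, s ≤ t → ψ t ^ p ≤ M ^ p :=
    fun t ht => Real.rpow_le_rpow (hψpos t (by linarith)).le (hψleM t ht) hp0.le
  have hψppnn : ∀ t, s ≤ t → (0:ℝ) ≤ ψ t ^ p :=
    fun t ht => Real.rpow_nonneg (hψpos t (by linarith)).le p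
  have hψlip : ∀ t₁ t₂, s ≤ t₁ → t₁ ≤ t₂ → ψ t₁ - ψ t₂ ≤ M^p * (t₂ - t₁) := by
    intro t₁ t₂ h1 h2
    have := aux_mvt (f := fun τ => -(ψ τ)) (f' := fun τ => ψ τ ^ p) h2
      (fun τ hτ => by
        have h := (hψd τ (by linarith [hτ.1])).neg
        rw [neg_neg] at h
        exact h)
      (fun τ hτ => hψpp τ (by linarith [hτ.1]))
    linarith [this]
  set L : ℝ := K + M^p with hLdef
  have hL0 : 0 < L := by positivity
  have hMp1nn : (0:ℝ) ≤ M^(p-1) := Real.rpow_nonneg hM0.le _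
  set C : ℝ := (2 + 3*p*M^(p-1))*L with hCdef
  have hC0 : 0 < C := by
    apply mul_pos _ hL0
    nlinarith [hMp1nn, hp0]
  set m : ℝ → ℝ := fun t => max (S t - ψ t) 0 with hmdef
  have hms : m s = 0 := max_eq_right (by linarith [hSM s, hψsM])
  have hmnn : ∀ t, 0 ≤ m t := fun t => le_max_right _ _
  have hmge : ∀ t, S t - ψ t ≤ m t := fun t => le_max_left _ _
  -- derivative of v := u x · − ψ and its universal bounds
  have hvd : ∀ x t, s ≤ t → HasDerivAt (fun τ => u x τ - ψ τ)
      ((∫ y, J (x - y) * (u y t - u x t)) - u x t ^ p + ψ t ^ p) t := by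
    intro x t ht
    have h := (hueq x t (by linarith)).sub (hψd t (by linarith))
    rw [sub_neg_eq_add] at h
    exact h
  have hvd_ub : ∀ x t, s ≤ t →
      (∫ y, J (x - y) * (u y t - u x t)) - u x t ^ p + ψ t ^ p ≤ L := by
    intro x t ht
    have h1 := hIabs x t
    rw [abs_le] at h1
    have h2 := hupnn x t (by linarith : (0:ℝ) ≤ t)
    have h3 := hψpp t ht
    rw [hLdef, hKdef]; linarith [h1.2]
  have hvd_lb : ∀ x t, s ≤ t →
      -((∫ y, J (x - y) * (u y t - u x t)) - u x t ^ p + ψ t ^ p) ≤ L := by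
    intro x t ht
    have h1 := hIabs x t
    rw [abs_le] at h1
    have h2 := hup x t (by linarith : (0:ℝ) ≤ t)
    have h3 := hψppnn t ht
    rw [hLdef, hKdef]; linarith [h1.1]
  -- one-sided Lipschitz bounds for v
  have hvlip_up : ∀ x t₁ t₂, s ≤ t₁ → t₁ ≤ t₂ →
      (u x t₂ - ψ t₂) - (u x t₁ - ψ t₁) ≤ L * (t₂ - t₁) := by
    intro x t₁ t₂ h1 h2
    exact aux_mvt h2 (fun τ hτ => hvd x τ (by linarith [hτ.1]))
      (fun τ hτ => hvd_ub x τ (by linarith [hτ.1]))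
  have hvlip_dn : ∀ x t₁ t₂, s ≤ t₁ → t₁ ≤ t₂ →
      (u x t₁ - ψ t₁) - (u x t₂ - ψ t₂) ≤ L * (t₂ - t₁) := by
    intro x t₁ t₂ h1 h2
    have := aux_mvt (f := fun τ => -(u x τ - ψ τ))
      (f' := fun τ => -((∫ y, J (x - y) * (u y τ - u x τ)) - u x τ ^ p + ψ τ ^ p)) h2
      (fun τ hτ => (hvd x τ (by linarith [hτ.1])).neg)
      (fun τ hτ => hvd_lb x τ (by linarith [hτ.1]))
    linarith [this]
  -- the key one-step estimate
  have hstep : ∀ t h : ℝ, s ≤ t → 0 < h → h ≤ 1 → m (t+h) ≤ m t + C*h^2 := by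
    intro t h hts hh0 hh1
    have hmt := hmnn t
    have hCh : 0 ≤ C*h^2 := by positivity
    suffices hsuff : ∀ x, u x (t+h) - ψ (t+h) ≤ m t + C*h^2 by
      apply max_le _ (by linarith)
      have : S (t+h) ≤ (m t + C*h^2) + ψ (t+h) := by
        apply ciSup_le
        intro x
        linarith [hsuff x]
      linarith
    intro x
    by_cases hAB : u x t - ψ t < -(2*L*h)
    · have h1 := hvlip_up x t (t+h) hts (by linarith)
      have h2 : (0:ℝ) < L*h := mul_pos hL0 hh0
      have h3 : L*(t+h-t) = L*h := by ring
      linarith [h1, hAB, hmt, hCh]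
    · push_neg at hAB
      -- lower bound along the interval
      have hvlow : ∀ τ ∈ Set.Icc t (t+h), -(u x τ - ψ τ) ≤ -(u x t - ψ t) + L*h := by
        intro τ hτ
        have := hvlip_dn x t τ hts hτ.1
        have hLτ : L * (τ - t) ≤ L * h := by
          apply mul_le_mul_of_nonneg_left _ hL0.le
          linarith [hτ.2]
        linarith
      -- derivative bound along the interval
      have hder : ∀ τ ∈ Set.Icc t (t+h),
          (∫ y, J (x - y) * (u y τ - u x τ)) - u x τ ^ p + ψ τ ^ p
            ≤ (m t - (u x t - ψ t)) + C*h := by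
        intro τ hτ
        have hsτ : s ≤ τ := by linarith [hτ.1]
        have haτ : a < τ := by linarith
        have h0τ : (0:ℝ) < τ := by linarith
        have hI := hIle x τ
        -- S τ bound
        have hS1 : S τ ≤ S t + K * h := by
          have h1 := hSlip t τ (by linarith) hτ.1
          have h2 : K * (τ - t) ≤ K * h := by
            apply mul_le_mul_of_nonneg_left _ hK0.le
            linarith [hτ.2]
          linarith
        -- ψ decrease bound
        have hps1 : ψ t - ψ τ ≤ M^p * h := by
          have h1 := hψlip t τ hts hτ.1
          have h2 : M^p * (τ - t) ≤ M^p * h := by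
            apply mul_le_mul_of_nonneg_left _ hMp0.le
            linarith [hτ.2]
          linarith
        -- tangent line bound
        have htan : ψ τ ^ p - u x τ ^ p ≤ p * (ψ τ)^(p-1) * (ψ τ - u x τ) :=
          aux_tangent (hψpos τ haτ) (hunn x τ h0τ.le) hp.le
        have hvτ := hvlow τ hτ
        have hcase2 : p * (ψ τ)^(p-1) * (ψ τ - u x τ) ≤ p * M^(p-1) * (3*L*h) := by
          rcases le_or_gt (ψ τ - u x τ) 0 with hneg | hpos
          · have h1 : p * (ψ τ)^(p-1) * (ψ τ - u x τ) ≤ 0 := by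
              apply mul_nonpos_of_nonneg_of_nonpos _ hneg
              exact mul_nonneg hp0.le (Real.rpow_nonneg (hψpos τ haτ).le _)
            have h2 : (0:ℝ) ≤ p * M^(p-1) * (3*L*h) := by positivity
            linarith
          · have hψτM : (ψ τ)^(p-1) ≤ M^(p-1) :=
              Real.rpow_le_rpow (hψpos τ haτ).le (hψleM τ hsτ) (by linarith)
            have h3 : ψ τ - u x τ ≤ 3*L*h := by
              have h4 : 0 < L*h := mul_pos hL0 hh0
              linarith [hvτ, hAB]
            have h5 : (ψ τ)^(p-1) * (ψ τ - u x τ) ≤ M^(p-1) * (3*L*h) :=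
              mul_le_mul hψτM h3 hpos.le hMp1nn
            calc p * (ψ τ)^(p-1) * (ψ τ - u x τ)
                = p * ((ψ τ)^(p-1) * (ψ τ - u x τ)) := by ring
              _ ≤ p * (M^(p-1) * (3*L*h)) := mul_le_mul_of_nonneg_left h5 hp0.le
              _ = p * M^(p-1) * (3*L*h) := by ring
        -- combine
        have hcomb : (∫ y, J (x - y) * (u y τ - u x τ)) - u x τ ^ p + ψ τ ^ p
            ≤ (S τ - ψ τ) - (u x τ - ψ τ) + (ψ τ ^ p - u x τ ^ p) := by
          linarith [hI]
        have hSψ : S τ - ψ τ ≤ m t + L*h := by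
          have := hmge t
          rw [hLdef]
          linarith [hS1, hps1]
        rw [hCdef]
        linarith [hcomb, hSψ, hvτ, htan, hcase2]
      have hfinal := aux_mvt (show t ≤ t + h by linarith)
        (fun τ hτ => hvd x τ (by linarith [hτ.1])) hder
      have hvtm : u x t - ψ t ≤ m t := by linarith [hmge t, huS x t]
      have h1mh : 0 ≤ 1 - h := by linarith
      have hmul : (u x t - ψ t) * (1 - h) ≤ m t * (1 - h) :=
        mul_le_mul_of_nonneg_right hvtm h1mh
      linarith [hfinal, hmul]
  -- discrete Gronwall iteration
  have hmt₀ : m t₀ ≤ 0 := by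
    have hkey : ∀ n : ℕ, 1 ≤ n → t₀ - s ≤ n → m t₀ ≤ C*(t₀-s)^2/n := by
      intro n hn1 hnts
      have hn0 : (0:ℝ) < n := by exact_mod_cast hn1
      set h : ℝ := (t₀ - s)/n with hhdef
      have hh0 : 0 < h := div_pos (by linarith) hn0
      have hh1 : h ≤ 1 := by
        rw [hhdef, div_le_one hn0]; linarith
      have hind : ∀ k : ℕ, k ≤ n → m (s + k*h) ≤ k*(C*h^2) := by
        intro k
        induction k with
        | zero => intro _; simp [hms]
        | succ k ih =>
          intro hk
          have hk' : k ≤ n := le_trans (Nat.le_succ k) hk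
          have hkh : (0:ℝ) ≤ (k:ℝ)*h := by positivity
          have hst2 := hstep (s + (k:ℝ)*h) h (by linarith) hh0 hh1
          have hih := ih hk'
          have harith : s + (↑(k+1):ℝ)*h = (s + (↑k:ℝ)*h) + h := by push_cast; ring
          rw [harith]
          push_cast
          linarith [hst2, hih]
      have ht₀eq : t₀ = s + (n:ℝ)*h := by
        rw [hhdef]; field_simp; ring
      have := hind n le_rfl
      rw [← ht₀eq] at this
      calc m t₀ ≤ (n:ℝ)*(C*h^2) := this
        _ = C*(t₀-s)^2/n := by rw [hhdef]; field_simp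
    by_contra hpos
    push_neg at hpos
    obtain ⟨n, hn⟩ := exists_nat_gt (max (max 1 (t₀ - s)) (C*(t₀-s)^2 / m t₀))
    have hn1 : 1 ≤ n := by
      have : (1:ℝ) ≤ (max (max 1 (t₀ - s)) (C*(t₀-s)^2 / m t₀)) :=
        le_trans (le_max_left _ _) (le_max_left _ _)
      exact_mod_cast this.trans hn.le
    have hnts : t₀ - s ≤ n :=
      le_trans (le_trans (le_max_right 1 _) (le_max_left _ _)) hn.le
    have hlt : C*(t₀-s)^2 / m t₀ < n :=
      lt_of_le_of_lt (le_max_right _ _) hn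
    have hn0 : (0:ℝ) < n := by exact_mod_cast hn1
    have := hkey n hn1 hnts
    rw [div_lt_iff₀ hpos] at hlt
    rw [le_div_iff₀ hn0] at this
    linarith [this, hlt]
  have := hmge t₀
  linarith [huS x₀ t₀, hmt₀]
end

section
/- There exists a constant C > 0, depending only on J and N, such that for every function v ∈ C^4(ℝ^N) whose partial derivatives up to order four are bounded and for every x ∈ ℝ^N, |(L v)(x) − A(J) Δv(x)| ≤ C · max_{|β| = 4} sup_{ℝ^N} |D^β v|, where the maximum is over multi-indices β of order four. -/
open MeasureTheory Filter

open MeasureTheory Filter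

section Aux

variable {E : Type*} [NormedAddCommGroup E] [NormedSpace ℝ E]

/-- One step of the iterated Taylor remainder estimate. -/
lemma taylor_step {h h' : ℝ → ℝ} {K c : ℝ} {k : ℕ} (hc : 0 < c) (hK : 0 ≤ K)
    (hd : ∀ t, HasDerivAt h (h' t) t) (hcont : Continuous h') (h0 : h 0 = 0)
    (hb : ∀ t ∈ Set.Icc (0:ℝ) 1, |h' t| ≤ K * t ^ k / c) :
    ∀ t ∈ Set.Icc (0:ℝ) 1, |h t| ≤ K * t ^ (k+1) / (c * (k+1)) := by
  intro t ht
  obtain ⟨ht0, ht1⟩ := ht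
  have hft : h t = ∫ s in (0:ℝ)..t, h' s := by
    rw [intervalIntegral.integral_eq_sub_of_hasDerivAt (fun s _ => hd s)
      (hcont.intervalIntegrable _ _), h0, sub_zero]
  have h1 : |∫ s in (0:ℝ)..t, h' s| ≤ ∫ s in (0:ℝ)..t, |h' s| :=
    intervalIntegral.abs_integral_le_integral_abs ht0
  have h2 : (∫ s in (0:ℝ)..t, |h' s|) ≤ ∫ s in (0:ℝ)..t, K * s ^ k / c := by
    apply intervalIntegral.integral_mono_on ht0
    · exact (hcont.abs.intervalIntegrable _ _)
    · exact ((continuous_const.mul (continuous_pow k)).div_const c).intervalIntegrable _ _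
    · intro s hs
      exact hb s ⟨hs.1, le_trans hs.2 ht1⟩
  have h3 : (∫ s in (0:ℝ)..t, K * s ^ k / c) = K * t ^ (k+1) / (c * (k+1)) := by
    have he : (fun s : ℝ => K * s ^ k / c) = fun s : ℝ => (K / c) * s ^ k := by
      funext s; ring
    rw [he, intervalIntegral.integral_const_mul, integral_pow, zero_pow (Nat.succ_ne_zero k),
      sub_zero, div_mul_div_comm]
  rw [hft]
  calc |∫ s in (0:ℝ)..t, h' s| ≤ ∫ s in (0:ℝ)..t, |h' s| := h1
    _ ≤ ∫ s in (0:ℝ)..t, K * s ^ k / c := h2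
    _ = K * t ^ (k+1) / (c * (k+1)) := h3

/-- Directional derivative operator. -/
noncomputable def dirD (z : E) (f : E → ℝ) : E → ℝ := fun y => fderiv ℝ f y z

lemma dirD_contDiff {n : ℕ} {f : E → ℝ} (hf : ContDiff ℝ ((n + 1 : ℕ)) f) (z : E) :
    ContDiff ℝ (n : ℕ) (dirD z f) := by
  have h : ContDiff ℝ (n : ℕ) (fderiv ℝ f) := hf.fderiv_right (by exact_mod_cast le_refl _)
  exact h.clm_apply contDiff_const

lemma iteratedFDeriv_const_dir (z : E) :
    ∀ (k : ℕ) (f : E → ℝ), ContDiff ℝ (k : ℕ) f → ∀ y : E,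
      iteratedFDeriv ℝ k f y (fun _ => z) = (dirD z)^[k] f y := by
  intro k
  induction k with
  | zero => intro f _ y; simp
  | succ k ih =>
    intro f hf y
    have hfd : ContDiff ℝ (k : ℕ) (fderiv ℝ f) := by
      apply hf.fderiv_right
      exact_mod_cast le_refl _
    have h1 : iteratedFDeriv ℝ (k+1) f y (fun _ => z)
        = iteratedFDeriv ℝ k (fderiv ℝ f) y (fun _ => z) z := by
      rw [iteratedFDeriv_succ_apply_right]
      rfl
    have h2 : iteratedFDeriv ℝ k (dirD z f) y (fun _ => z)
        = iteratedFDeriv ℝ k (fderiv ℝ f) y (fun _ => z) z := by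
      have hcomp := (ContinuousLinearMap.apply ℝ ℝ z).iteratedFDeriv_comp_left (x := y) hfd.contDiffAt
        (le_refl (k : WithTop ℕ∞))
      have : dirD z f = (ContinuousLinearMap.apply ℝ ℝ z) ∘ (fderiv ℝ f) := rfl
      rw [this, hcomp]
      rfl
    have h3 : ContDiff ℝ (k : ℕ) (dirD z f) := dirD_contDiff hf z
    rw [h1, ← h2, ih (dirD z f) h3 y, ← Function.iterate_succ_apply]


lemma line_hasDerivAt {f : E → ℝ} (hf : Differentiable ℝ f) (x z : E) (t : ℝ) :
    HasDerivAt (fun s : ℝ => f (x + s • z)) (dirD z f (x + t • z)) t := by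
  have h1 : HasDerivAt (fun s : ℝ => x + s • z) z t := by
    simpa using ((hasDerivAt_id t).smul_const z).const_add x
  exact (hf (x + t • z)).hasFDerivAt.comp_hasDerivAt t h1

lemma taylor_remainder {v : E → ℝ} (hv : ContDiff ℝ ((4 : ℕ)) v) (x z : E) {M : ℝ}
    (hM : ∀ y, ‖iteratedFDeriv ℝ 4 v y‖ ≤ M) :
    |v (x + z) - v x - (dirD z)^[1] v x - (dirD z)^[2] v x / 2 - (dirD z)^[3] v x / 6|
      ≤ M * ‖z‖ ^ 4 / 24 := by
  set K := M * ‖z‖ ^ 4 with hKdef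
  have hK : 0 ≤ K := by
    have hM0 : (0:ℝ) ≤ M := le_trans (norm_nonneg _) (hM x)
    positivity
  -- smoothness of the iterates
  have h1 : ContDiff ℝ ((3:ℕ)) ((dirD z)^[1] v) := by
    simpa using dirD_contDiff (n := 3) hv z
  have h2 : ContDiff ℝ ((2:ℕ)) ((dirD z)^[2] v) := by
    have := dirD_contDiff (n := 2) h1 z
    simpa [← Function.iterate_succ_apply' (dirD z)] using this
  have h3 : ContDiff ℝ ((1:ℕ)) ((dirD z)^[3] v) := by
    have := dirD_contDiff (n := 1) h2 z
    simpa [← Function.iterate_succ_apply' (dirD z)] using this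
  have h4 : ContDiff ℝ ((0:ℕ)) ((dirD z)^[4] v) := by
    have := dirD_contDiff (n := 0) h3 z
    simpa [← Function.iterate_succ_apply' (dirD z)] using this
  -- derivatives along the line
  have hder : ∀ k : ℕ, k ≤ 3 → ∀ t : ℝ,
      HasDerivAt (fun s : ℝ => (dirD z)^[k] v (x + s • z))
        ((dirD z)^[k+1] v (x + t • z)) t := by
    intro k hk t
    have hdiff : Differentiable ℝ ((dirD z)^[k] v) := by
      interval_cases k
      · exact hv.differentiable (by norm_num)
      · exact h1.differentiable (by norm_num)
      · exact h2.differentiable (by norm_num)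
      · exact h3.differentiable (by norm_num)
    have := line_hasDerivAt hdiff x z t
    simpa [← Function.iterate_succ_apply' (dirD z)] using this
  -- bound on the fourth directional derivative
  have hbound4 : ∀ y : E, |(dirD z)^[4] v y| ≤ K := by
    intro y
    have he : iteratedFDeriv ℝ 4 v y (fun _ => z) = (dirD z)^[4] v y :=
      iteratedFDeriv_const_dir z 4 v hv y
    rw [← he]
    calc |iteratedFDeriv ℝ 4 v y (fun _ => z)|
        ≤ ‖iteratedFDeriv ℝ 4 v y‖ * ∏ _i : Fin 4, ‖z‖ :=
          (iteratedFDeriv ℝ 4 v y).le_opNorm _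
      _ = ‖iteratedFDeriv ℝ 4 v y‖ * ‖z‖ ^ 4 := by
          rw [Finset.prod_const]; norm_num
      _ ≤ M * ‖z‖ ^ 4 := by
          apply mul_le_mul_of_nonneg_right (hM y) (by positivity)
  -- the remainder functions
  set g0 : ℝ → ℝ := fun t => v (x + t • z) with hg0
  set g1 : ℝ → ℝ := fun t => (dirD z)^[1] v (x + t • z) with hg1
  set g2 : ℝ → ℝ := fun t => (dirD z)^[2] v (x + t • z) with hg2
  set g3 : ℝ → ℝ := fun t => (dirD z)^[3] v (x + t • z) with hg3
  set g4 : ℝ → ℝ := fun t => (dirD z)^[4] v (x + t • z) with hg4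
  have hcont4 : Continuous g4 := by
    have : Continuous ((dirD z)^[4] v) := h4.continuous
    exact this.comp (by continuity)
  have hcont3 : Continuous g3 := by
    have : Continuous ((dirD z)^[3] v) := h3.continuous
    exact this.comp (by continuity)
  have hcont2 : Continuous g2 := by
    have : Continuous ((dirD z)^[2] v) := h2.continuous
    exact this.comp (by continuity)
  have hcont1 : Continuous g1 := by
    have : Continuous ((dirD z)^[1] v) := h1.continuous
    exact this.comp (by continuity)
  -- step 1
  have b3 : ∀ t ∈ Set.Icc (0:ℝ) 1, |g3 t - g3 0| ≤ K * t ^ 1 / 1 := by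
    have := taylor_step (h := fun t => g3 t - g3 0) (h' := g4) (K := K) (c := 1) (k := 0)
      one_pos hK (fun t => (hder 3 (by norm_num) t).sub_const (g3 0))
      hcont4 (by simp)
      (fun t ht => by simpa [hg4] using hbound4 (x + t • z))
    intro t ht
    simpa using this t ht
  -- step 2
  have b2 : ∀ t ∈ Set.Icc (0:ℝ) 1, |g2 t - g2 0 - g3 0 * t| ≤ K * t ^ 2 / 2 := by
    have hd : ∀ t : ℝ, HasDerivAt (fun t => g2 t - g2 0 - g3 0 * t) (g3 t - g3 0) t := by
      intro t
      have ha := (hder 2 (by norm_num) t).sub_const (g2 0)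
      have hb' : HasDerivAt (fun t : ℝ => g3 0 * t) (g3 0) t := by
        simpa using (hasDerivAt_id t).const_mul (g3 0)
      exact ha.sub hb'
    have := taylor_step (h := fun t => g2 t - g2 0 - g3 0 * t) (h' := fun t => g3 t - g3 0)
      (K := K) (c := 1) (k := 1) one_pos hK hd (hcont3.sub continuous_const) (by simp)
      (fun t ht => by simpa using b3 t ht)
    intro t ht
    have h' := this t ht
    norm_num at h' ⊢
    linarith
  -- step 3
  have b1 : ∀ t ∈ Set.Icc (0:ℝ) 1,
      |g1 t - g1 0 - g2 0 * t - g3 0 * t ^ 2 / 2| ≤ K * t ^ 3 / 6 := by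
    have hd : ∀ t : ℝ, HasDerivAt (fun t => g1 t - g1 0 - g2 0 * t - g3 0 * t ^ 2 / 2)
        (g2 t - g2 0 - g3 0 * t) t := by
      intro t
      have ha := (hder 1 (by norm_num) t).sub_const (g1 0)
      have hb' : HasDerivAt (fun t : ℝ => g2 0 * t) (g2 0) t := by
        simpa using (hasDerivAt_id t).const_mul (g2 0)
      have hc' : HasDerivAt (fun t : ℝ => g3 0 * t ^ 2 / 2) (g3 0 * t) t := by
        have := ((hasDerivAt_pow 2 t).const_mul (g3 0)).div_const 2
        simpa using this.congr_deriv (by ring)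
      exact (ha.sub hb').sub hc'
    have := taylor_step (h := fun t => g1 t - g1 0 - g2 0 * t - g3 0 * t ^ 2 / 2)
      (h' := fun t => g2 t - g2 0 - g3 0 * t) (K := K) (c := 2) (k := 2)
      two_pos hK hd (by fun_prop) (by simp)
      (fun t ht => by simpa using b2 t ht)
    intro t ht
    have h' := this t ht
    norm_num at h' ⊢
    linarith
  -- step 4
  have b0 : ∀ t ∈ Set.Icc (0:ℝ) 1,
      |g0 t - g0 0 - g1 0 * t - g2 0 * t ^ 2 / 2 - g3 0 * t ^ 3 / 6| ≤ K * t ^ 4 / 24 := by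
    have hd : ∀ t : ℝ, HasDerivAt
        (fun t => g0 t - g0 0 - g1 0 * t - g2 0 * t ^ 2 / 2 - g3 0 * t ^ 3 / 6)
        (g1 t - g1 0 - g2 0 * t - g3 0 * t ^ 2 / 2) t := by
      intro t
      have ha := (hder 0 (by norm_num) t).sub_const (g0 0)
      have hb' : HasDerivAt (fun t : ℝ => g1 0 * t) (g1 0) t := by
        simpa using (hasDerivAt_id t).const_mul (g1 0)
      have hc' : HasDerivAt (fun t : ℝ => g2 0 * t ^ 2 / 2) (g2 0 * t) t := by
        have := ((hasDerivAt_pow 2 t).const_mul (g2 0)).div_const 2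
        simpa using this.congr_deriv (by ring)
      have he' : HasDerivAt (fun t : ℝ => g3 0 * t ^ 3 / 6) (g3 0 * t ^ 2 / 2) t := by
        have := ((hasDerivAt_pow 3 t).const_mul (g3 0)).div_const 6
        simpa using this.congr_deriv (by ring)
      exact ((ha.sub hb').sub hc').sub he'
    have := taylor_step (h := fun t => g0 t - g0 0 - g1 0 * t - g2 0 * t ^ 2 / 2 - g3 0 * t ^ 3 / 6)
      (h' := fun t => g1 t - g1 0 - g2 0 * t - g3 0 * t ^ 2 / 2) (K := K) (c := 6) (k := 3)
      (by norm_num) hK hd (by fun_prop) (by simp)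
      (fun t ht => by simpa using b1 t ht)
    intro t ht
    have h' := this t ht
    norm_num at h' ⊢
    linarith
  have hfinal := b0 1 (by norm_num)
  have e0 : g0 1 = v (x + z) := by simp [hg0]
  have e00 : g0 0 = v x := by simp [hg0]
  have e10 : g1 0 = (dirD z)^[1] v x := by simp [hg1]
  have e20 : g2 0 = (dirD z)^[2] v x := by simp [hg2]
  have e30 : g3 0 = (dirD z)^[3] v x := by simp [hg3]
  rw [e0, e00, e10, e20, e30] at hfinal
  norm_num at hfinal ⊢
  linarith [abs_sub_abs_le_abs_sub (0:ℝ) (0:ℝ)]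

end Aux

section Euclid
variable {N : ℕ}

/-- Negation of the `i`-th coordinate, as a linear isometry equivalence. -/
noncomputable def negCoord (i : Fin N) :
    EuclideanSpace ℝ (Fin N) ≃ₗᵢ[ℝ] EuclideanSpace ℝ (Fin N) where
  toLinearEquiv :=
    { toFun := fun z => WithLp.toLp 2 (fun j => if j = i then -(z j) else z j)
      invFun := fun z => WithLp.toLp 2 (fun j => if j = i then -(z j) else z j)
      map_add' := by
        intro a b; ext j; by_cases h : j = i <;> simp [h, PiLp.add_apply] <;> ring
      map_smul' := by
        intro c a; ext j; by_cases h : j = i <;> simp [h, PiLp.smul_apply] <;> ring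
      left_inv := by intro z; ext j; by_cases h : j = i <;> simp [h]
      right_inv := by intro z; ext j; by_cases h : j = i <;> simp [h] }
  norm_map' := by
    intro z
    rw [EuclideanSpace.norm_eq, EuclideanSpace.norm_eq]
    congr 1
    apply Finset.sum_congr rfl
    intro j _
    by_cases h : j = i <;> simp [h]

lemma negCoord_apply (i : Fin N) (z : EuclideanSpace ℝ (Fin N)) (j : Fin N) :
    negCoord i z j = if j = i then -(z j) else z j := rfl

/-- Swap of two coordinates, as a linear isometry equivalence. -/
noncomputable def swapCoord (i j : Fin N) :
    EuclideanSpace ℝ (Fin N) ≃ₗᵢ[ℝ] EuclideanSpace ℝ (Fin N) :=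
  LinearIsometryEquiv.piLpCongrLeft 2 ℝ ℝ (Equiv.swap i j)

lemma swapCoord_apply (i j : Fin N) (z : EuclideanSpace ℝ (Fin N)) (k : Fin N) :
    swapCoord i j z k = z (Equiv.swap i j k) := by
  rw [swapCoord, LinearIsometryEquiv.piLpCongrLeft_apply]
  simp [Equiv.piCongrLeft'_apply, Equiv.symm_swap]

lemma integral_comp_lie (T : EuclideanSpace ℝ (Fin N) ≃ₗᵢ[ℝ] EuclideanSpace ℝ (Fin N))
    (f : EuclideanSpace ℝ (Fin N) → ℝ) : ∫ z, f (T z) = ∫ z, f z :=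
  T.measurePreserving.integral_comp
    (T.toHomeomorph.toMeasurableEquiv.measurableEmbedding) f

lemma norm_sq_sum (z : EuclideanSpace ℝ (Fin N)) : ‖z‖ ^ 2 = ∑ i, (z i) ^ 2 := by
  rw [EuclideanSpace.norm_eq, Real.sq_sqrt (by positivity)]
  exact Finset.sum_congr rfl fun i _ => by rw [Real.norm_eq_abs, sq_abs]

lemma sum_single_eq (z : EuclideanSpace ℝ (Fin N)) :
    ∑ i, z i • EuclideanSpace.single i (1 : ℝ) = z := by
  have := (EuclideanSpace.basisFun (Fin N) ℝ).sum_repr z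
  simpa [EuclideanSpace.basisFun_apply] using this

lemma bilin_sum (H : EuclideanSpace ℝ (Fin N) →L[ℝ] EuclideanSpace ℝ (Fin N) →L[ℝ] ℝ)
    (z : EuclideanSpace ℝ (Fin N)) :
    H z z = ∑ i, ∑ j, (z i * z j) *
      H (EuclideanSpace.single i 1) (EuclideanSpace.single j 1) := by
  conv_lhs => rw [← sum_single_eq z]
  simp only [map_sum, ContinuousLinearMap.sum_apply, ContinuousLinearMap.coe_sum',
    Finset.sum_apply]
  rw [Finset.sum_comm]
  apply Finset.sum_congr rfl
  intro i _
  apply Finset.sum_congr rfl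
  intro j _
  rw [H.map_smul, ContinuousLinearMap.smul_apply, (H _).map_smul]
  simp [smul_eq_mul]
  ring

end Euclid

/-- The Laplacian of `f : ℝ^N → ℝ`, as the sum of the second partial derivatives. -/
noncomputable def lap {N : ℕ} (f : EuclideanSpace ℝ (Fin N) → ℝ)
    (x : EuclideanSpace ℝ (Fin N)) : ℝ :=
  ∑ i : Fin N, fderiv ℝ (fun y => fderiv ℝ f y (EuclideanSpace.single i 1)) x
    (EuclideanSpace.single i 1)

/-- Second-order expansion of the nonlocal operator: there is
`C > 0` (depending only on `J` and `N`) such that for every `C⁴` function `v` with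
bounded derivatives up to order four,
`|L v(x) − A(J) Δv(x)| ≤ C · sup ‖D⁴ v‖`. -/
theorem stmt_18
    (N : ℕ) (hN : 0 < N)
    (J : EuclideanSpace ℝ (Fin N) → ℝ)
    (hJsm : ContDiff ℝ (⊤ : ℕ∞) J)
    (hJsupp : Function.support J ⊆ Metric.closedBall 0 1)
    (hJnn : ∀ x, 0 ≤ J x)
    (hJrad : ∀ x y : EuclideanSpace ℝ (Fin N), ‖x‖ = ‖y‖ → J x = J y)
    (hJint : ∫ x, J x = 1)
    :
    ∃ C > (0 : ℝ), ∀ v : EuclideanSpace ℝ (Fin N) → ℝ, ContDiff ℝ 4 v →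
      (∀ i : ℕ, i ≤ 4 → ∃ M : ℝ, ∀ x, ‖iteratedFDeriv ℝ i v x‖ ≤ M) →
      ∀ x : EuclideanSpace ℝ (Fin N),
        |(∫ y, J (x - y) * (v y - v x)) -
            ((1 : ℝ) / (2 * N) * ∫ z, J z * ‖z‖ ^ 2) * lap v x| ≤
          C * ⨆ x : EuclideanSpace ℝ (Fin N), ‖iteratedFDeriv ℝ 4 v x‖ := by
  classical
  refine ⟨1, one_pos, ?_⟩
  intro v hv hbdd x
  obtain ⟨M₀, hM₀⟩ := hbdd 4 (le_refl _)
  set M : ℝ := ⨆ y : EuclideanSpace ℝ (Fin N), ‖iteratedFDeriv ℝ 4 v y‖ with hMdef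
  have hbdda : BddAbove (Set.range fun y : EuclideanSpace ℝ (Fin N) =>
      ‖iteratedFDeriv ℝ 4 v y‖) := ⟨M₀, by rintro r ⟨y, rfl⟩; exact hM₀ y⟩
  have hM : ∀ y, ‖iteratedFDeriv ℝ 4 v y‖ ≤ M := fun y => le_ciSup hbdda y
  have hM0 : (0:ℝ) ≤ M := le_trans (norm_nonneg _) (hM x)
  have hv4 : ContDiff ℝ ((4:ℕ)) v := by exact_mod_cast hv
  have hvc : Continuous v := hv4.continuous
  have hJcont : Continuous J := hJsm.continuous
  have hJcs : HasCompactSupport J :=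
    HasCompactSupport.intro (isCompact_closedBall (0 : EuclideanSpace ℝ (Fin N)) 1)
      (fun y hy => by
        by_contra h
        exact hy (hJsupp h))
  have hint : ∀ f : EuclideanSpace ℝ (Fin N) → ℝ, Continuous f →
      Integrable (fun z => J z * f z) := by
    intro f hf
    exact (hJcont.mul hf).integrable_of_hasCompactSupport hJcs.mul_right
  have hJeven : ∀ z, J (-z) = J z := fun z => hJrad _ _ (by simp)
  -- the Taylor polynomial terms
  set T1 : EuclideanSpace ℝ (Fin N) → ℝ :=
    fun z => iteratedFDeriv ℝ 1 v x (fun _ => z) with hT1def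
  set T2 : EuclideanSpace ℝ (Fin N) → ℝ :=
    fun z => iteratedFDeriv ℝ 2 v x (fun _ => z) with hT2def
  set T3 : EuclideanSpace ℝ (Fin N) → ℝ :=
    fun z => iteratedFDeriv ℝ 3 v x (fun _ => z) with hT3def
  set R : EuclideanSpace ℝ (Fin N) → ℝ :=
    fun z => v (x + z) - v x - T1 z - T2 z / 2 - T3 z / 6 with hRdef
  have hTc : ∀ k : ℕ, Continuous
      (fun z : EuclideanSpace ℝ (Fin N) => iteratedFDeriv ℝ k v x (fun _ => z)) := by
    intro k
    exact (iteratedFDeriv ℝ k v x).cont.comp (continuous_pi fun _ => continuous_id)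
  have hRc : Continuous R := by
    have h1 : Continuous fun z : EuclideanSpace ℝ (Fin N) => v (x + z) :=
      hvc.comp (continuous_const.add continuous_id)
    exact (((h1.sub continuous_const).sub (hTc 1)).sub ((hTc 2).div_const 2)).sub
      ((hTc 3).div_const 6)
  have hR : ∀ z, |R z| ≤ M * ‖z‖ ^ 4 / 24 := by
    intro z
    have e1 : T1 z = (dirD z)^[1] v x :=
      iteratedFDeriv_const_dir z 1 v (hv4.of_le (by norm_num)) x
    have e2 : T2 z = (dirD z)^[2] v x :=
      iteratedFDeriv_const_dir z 2 v (hv4.of_le (by norm_num)) x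
    have e3 : T3 z = (dirD z)^[3] v x :=
      iteratedFDeriv_const_dir z 3 v (hv4.of_le (by norm_num)) x
    have htr := taylor_remainder hv4 x z hM
    rw [hRdef]
    simp only []
    rw [e1, e2, e3]
    exact htr
  -- change of variables
  have hchg : (∫ y, J (x - y) * (v y - v x)) = ∫ z, J z * (v (x + z) - v x) := by
    have h1 : (∫ y, J (x - y) * (v y - v x)) = ∫ z, J z * (v (x - z) - v x) := by
      have h := integral_sub_left_eq_self (fun z => J z * (v (x - z) - v x)) volume x
      simp only [sub_sub_cancel] at h
      exact h
    have h2 : (∫ z, J z * (v (x - z) - v x)) = ∫ z, J z * (v (x + z) - v x) := by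
      have h := integral_neg_eq_self (fun z => J z * (v (x + z) - v x)) volume
      calc (∫ z, J z * (v (x - z) - v x))
          = ∫ z, J (-z) * (v (x + -z) - v x) := by
            congr 1; funext z; rw [hJeven, show x - z = x + -z from sub_eq_add_neg x z]
        _ = ∫ z, J z * (v (x + z) - v x) := h
    rw [h1, h2]
  -- odd multilinear terms vanish
  have hodd_multi : ∀ (k : ℕ), Odd k →
      ∀ (F : ContinuousMultilinearMap ℝ (fun _ : Fin k => EuclideanSpace ℝ (Fin N)) ℝ)
        (z : EuclideanSpace ℝ (Fin N)), F (fun _ => -z) = - F (fun _ => z) := by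
    intro k hk F z
    have h : (fun _ : Fin k => -z) = fun _ : Fin k => (-1:ℝ) • z := by funext i; simp
    rw [h, F.map_smul_univ]
    simp [Finset.prod_const, hk.neg_one_pow]
  have hvanish : ∀ f : EuclideanSpace ℝ (Fin N) → ℝ, (∀ z, f (-z) = - f z) →
      (∫ z, J z * f z) = 0 := by
    intro f hf
    have h1 : ∫ z, J (-z) * f (-z) = ∫ z, J z * f z :=
      integral_neg_eq_self (fun z => J z * f z) volume
    have h2 : ∫ z, J (-z) * f (-z) = ∫ z, -(J z * f z) := by
      congr 1; funext z; rw [hJeven, hf]; ring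
    rw [h2, integral_neg] at h1
    linarith
  -- integrability
  have hI1 : Integrable (fun z => J z * T1 z) := hint _ (hTc 1)
  have hI2 : Integrable (fun z => J z * T2 z) := hint _ (hTc 2)
  have hI3 : Integrable (fun z => J z * T3 z) := hint _ (hTc 3)
  have hIR : Integrable (fun z => J z * R z) := hint _ hRc
  -- splitting of the integral
  have hsplit : (∫ z, J z * (v (x + z) - v x)) =
      (∫ z, J z * T1 z) + ((1/2) * (∫ z, J z * T2 z) + ((1/6) * (∫ z, J z * T3 z)
        + ∫ z, J z * R z)) := by
    have hpt : (fun z => J z * (v (x + z) - v x)) =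
        fun z => J z * T1 z + ((1/2) * (J z * T2 z) + ((1/6) * (J z * T3 z) + J z * R z)) := by
      funext z
      simp only [hRdef]
      ring
    have hIa : Integrable (fun z => (1/2 : ℝ) * (J z * T2 z)) := hI2.const_mul _
    have hIb : Integrable (fun z => (1/6 : ℝ) * (J z * T3 z)) := hI3.const_mul _
    have hIc : Integrable (fun z => (1/6 : ℝ) * (J z * T3 z) + J z * R z) := hIb.add hIR
    have hId : Integrable (fun z => (1/2 : ℝ) * (J z * T2 z)
        + ((1/6 : ℝ) * (J z * T3 z) + J z * R z)) := hIa.add hIc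
    rw [hpt, integral_add hI1 hId, integral_add hIa hIc, integral_add hIb hIR,
      integral_const_mul, integral_const_mul]
  have hT1zero : (∫ z, J z * T1 z) = 0 :=
    hvanish _ (fun z => hodd_multi 1 odd_one (iteratedFDeriv ℝ 1 v x) z)
  have hT3zero : (∫ z, J z * T3 z) = 0 :=
    hvanish _ (fun z => hodd_multi 3 (by decide) (iteratedFDeriv ℝ 3 v x) z)
  -- the quadratic term
  set S : ℝ := ∫ z : EuclideanSpace ℝ (Fin N), J z * ‖z‖ ^ 2 with hSdef
  set H := fderiv ℝ (fderiv ℝ v) x with hHdef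
  have hT2H : ∀ z, T2 z = H z z := fun z => iteratedFDeriv_two_apply v x fun _ => z
  have hdiff2 : DifferentiableAt ℝ (fderiv ℝ v) x := by
    have h : ContDiff ℝ (1:ℕ) (fderiv ℝ v) := hv4.fderiv_right (by norm_num)
    exact (h.differentiable (by norm_num)) x
  have hlap : lap v x =
      ∑ i, H (EuclideanSpace.single i 1) (EuclideanSpace.single i 1) := by
    unfold lap
    apply Finset.sum_congr rfl
    intro i _
    rw [fderiv_clm_apply hdiff2 (differentiableAt_const (EuclideanSpace.single i (1:ℝ)))]
    simp [hHdef]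
  have hcoord : ∀ i : Fin N, Continuous fun z : EuclideanSpace ℝ (Fin N) => z i :=
    fun i => (continuous_apply i).comp (PiLp.continuous_ofLp (p := 2) (β := fun _ => ℝ))
  have hoff : ∀ i j : Fin N, i ≠ j → (∫ z, J z * (z i * z j)) = 0 := by
    intro i j hij
    have h := integral_comp_lie (negCoord i) (fun z => J z * (z i * z j))
    have h3 : (∫ z, J (negCoord i z) * ((negCoord i z) i * ((negCoord i z) j)))
        = ∫ z, -(J z * (z i * z j)) := by
      congr 1
      funext z
      have hJ : J (negCoord i z) = J z := hJrad _ _ ((negCoord i).norm_map z)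
      rw [hJ, negCoord_apply, negCoord_apply, if_pos rfl, if_neg hij.symm]
      ring
    rw [h3, integral_neg] at h
    linarith
  have hdiagval : ∀ i j : Fin N, (∫ z, J z * (z i * z i)) = ∫ z, J z * (z j * z j) := by
    intro i j
    have h := integral_comp_lie (swapCoord i j) (fun z => J z * (z j * z j))
    have h2 : ∀ z : EuclideanSpace ℝ (Fin N),
        J (swapCoord i j z) * ((swapCoord i j z) j * ((swapCoord i j z) j))
          = J z * (z i * z i) := by
      intro z
      have hJ : J (swapCoord i j z) = J z := hJrad _ _ ((swapCoord i j).norm_map z)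
      rw [hJ, swapCoord_apply, Equiv.swap_apply_right]
    calc (∫ z, J z * (z i * z i))
        = ∫ z, J (swapCoord i j z) * ((swapCoord i j z) j * ((swapCoord i j z) j)) := by
          congr 1; funext z; exact (h2 z).symm
      _ = ∫ z, J z * (z j * z j) := h
  have hsumdiag : (∑ i, (∫ z, J z * (z i * z i))) = S := by
    rw [← integral_finset_sum _ (fun i _ => hint (fun z => z i * z i) ((hcoord i).mul (hcoord i)))]
    congr 1
    funext z
    rw [← Finset.mul_sum, norm_sq_sum]
    congr 1
    exact Finset.sum_congr rfl fun i _ => by ring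
  have hNpos : (0:ℝ) < N := by exact_mod_cast hN
  have hNne : (N:ℝ) ≠ 0 := ne_of_gt hNpos
  have hdiag : ∀ i : Fin N, (∫ z, J z * (z i * z i)) = S / N := by
    intro i
    have h1 : (∑ j : Fin N, (∫ z, J z * (z j * z j)))
        = N * (∫ z, J z * (z i * z i)) := by
      rw [Finset.sum_congr rfl (fun j _ => hdiagval j i)]
      simp [Finset.sum_const, Finset.card_univ, mul_comm]
    rw [hsumdiag] at h1
    rw [eq_div_iff hNne]
    linarith
  have hquad : (∫ z, J z * T2 z) = (S / N) * lap v x := by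
    have hexp : (fun z => J z * T2 z) = fun z : EuclideanSpace ℝ (Fin N) =>
        ∑ i, ∑ j, (J z * (z i * z j)) *
          (H (EuclideanSpace.single i 1) (EuclideanSpace.single j 1)) := by
      funext z
      rw [hT2H z, bilin_sum, Finset.mul_sum]
      apply Finset.sum_congr rfl
      intro i _
      rw [Finset.mul_sum]
      apply Finset.sum_congr rfl
      intro j _
      ring
    rw [hexp, integral_finset_sum _ (fun i _ => integrable_finset_sum _
      (fun j _ => (hint (fun z => z i * z j) ((hcoord i).mul (hcoord j))).mul_const _))]
    have hinner : ∀ i : Fin N, (∫ z, ∑ j, (J z * (z i * z j)) *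
        (H (EuclideanSpace.single i 1) (EuclideanSpace.single j 1)))
        = (S / N) * H (EuclideanSpace.single i 1) (EuclideanSpace.single i 1) := by
      intro i
      rw [integral_finset_sum _ (fun j _ => (hint (fun z => z i * z j) ((hcoord i).mul (hcoord j))).mul_const _)]
      rw [Finset.sum_eq_single i]
      · rw [integral_mul_const, hdiag i]
      · intro j _ hji
        rw [integral_mul_const, hoff i j (Ne.symm hji), zero_mul]
      · intro h; exact absurd (Finset.mem_univ i) h
    rw [Finset.sum_congr rfl (fun i _ => hinner i), ← Finset.mul_sum, hlap]
  -- key identity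
  have hkey : (∫ y, J (x - y) * (v y - v x)) - ((1:ℝ)/(2*(N:ℝ)) * S) * lap v x
      = ∫ z, J z * R z := by
    rw [hchg, hsplit, hT1zero, hT3zero, hquad]
    field_simp
    ring
  -- final estimate
  have habs : |∫ z, J z * R z| ≤ M / 24 := by
    have h1 : |∫ z, J z * R z| ≤ ∫ z, ‖J z * R z‖ := by
      rw [← Real.norm_eq_abs]
      exact norm_integral_le_integral_norm _
    have hpt24 : ∀ z, ‖J z * R z‖ ≤ J z * (M / 24) := by
      intro z
      rw [Real.norm_eq_abs, abs_mul, abs_of_nonneg (hJnn z)]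
      by_cases hz : J z = 0
      · simp [hz]
      · have hzsupp : z ∈ Metric.closedBall (0 : EuclideanSpace ℝ (Fin N)) 1 :=
          hJsupp (Function.mem_support.mpr hz)
        have hz1 : ‖z‖ ≤ 1 := by
          simpa [Metric.mem_closedBall, dist_zero_right] using hzsupp
        have h4 : ‖z‖ ^ 4 ≤ 1 := pow_le_one₀ (norm_nonneg z) hz1
        have hRz : |R z| ≤ M / 24 := by
          refine le_trans (hR z) ?_
          have h5 : M * ‖z‖ ^ 4 ≤ M * 1 := mul_le_mul_of_nonneg_left h4 hM0
          have h6 : M * ‖z‖ ^ 4 / 24 ≤ M * 1 / 24 := by linarith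
          calc M * ‖z‖ ^ 4 / 24 ≤ M * 1 / 24 := h6
            _ = M / 24 := by ring
        exact mul_le_mul_of_nonneg_left hRz (hJnn z)
    have h2 : (∫ z, ‖J z * R z‖) ≤ ∫ z, J z * (M / 24) :=
      integral_mono hIR.norm (hint (fun _ => M / 24) continuous_const) hpt24
    have h3 : (∫ z, J z * (M / 24)) = M / 24 := by
      rw [integral_mul_const, hJint, one_mul]
    linarith
  calc |(∫ y, J (x - y) * (v y - v x)) - ((1:ℝ)/(2*(N:ℝ)) * S) * lap v x|
      = |∫ z, J z * R z| := by rw [hkey]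
    _ ≤ M / 24 := habs
    _ ≤ 1 * M := by linarith
end
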